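/- arXiv:1605.05860 — 6 statements merged into one kernel-verified Lean document; each statement's English description precedes it below -/
import Mathlib

section
/- Let A be a real |E|×m matrix, δ₀ a real |E|×n matrix, H = δ₀(δ₀ᵀδ₀)⁺δ₀ᵀ the orthogonal projection onto col(δ₀), s ∈ ℝ^m a vector, Q an |E|×m matrix with orthonormal columns satisfying δ₀ᵀQ = 0 and AᵀQ = 0, and C an m×m matrix with CᵀC = 2·diag(s) − diag(s)(Aᵀ(I−H)A)⁻¹diag(s), where Aᵀ(I−H)A is invertible. Then the matrix à := A − (I−H)A(Aᵀ(I−H)A)⁻¹diag(s) + QC satisfies ÃᵀÃ = AᵀA, AᵀÃ = AᵀA − diag(s), and δ₀ᵀÃ = δ₀ᵀA. -/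
open Matrix

/-- Cancellation: over `ℝ`, `MᵀM X = MᵀM Y` implies `M X = M Y`. -/
lemma knockoff_mul_cancel {E p q : Type*} [Fintype E] [Fintype p]
    (M : Matrix E p ℝ) (X Y : Matrix p q ℝ)
    (h : Mᵀ * M * X = Mᵀ * M * Y) : M * X = M * Y := by
  have h0 : Mᵀ * M * (X - Y) = 0 := by
    rw [Matrix.mul_sub, h, sub_self]
  rw [← Matrix.conjTranspose_eq_transpose_of_trivial] at h0
  have h1 := (Matrix.conjTranspose_mul_self_mul_eq_zero M (X - Y)).1 h0
  rw [Matrix.mul_sub] at h1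
  exact sub_eq_zero.mp h1

/-- Cancellation against the identity: `MᵀM X = MᵀM` implies `M X = M`. -/
lemma knockoff_mul_cancel_one {E p : Type*} [Fintype E] [Fintype p]
    (M : Matrix E p ℝ) (X : Matrix p p ℝ)
    (h : Mᵀ * M * X = Mᵀ * M) : M * X = M := by
  have hXt : Xᵀ * (Mᵀ * M) = Mᵀ * M := by
    have h' := congrArg Matrix.transpose h
    simpa [Matrix.transpose_mul, Matrix.mul_assoc] using h'
  have a1 : Xᵀ * Mᵀ * (M * X) = Mᵀ * M := by
    calc Xᵀ * Mᵀ * (M * X) = Xᵀ * (Mᵀ * M * X) := by simp only [Matrix.mul_assoc]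
      _ = Xᵀ * (Mᵀ * M) := by rw [h]
      _ = Mᵀ * M := hXt
  have a2 : Xᵀ * Mᵀ * M = Mᵀ * M := by rw [Matrix.mul_assoc, hXt]
  have a3 : Mᵀ * (M * X) = Mᵀ * M := by rw [← Matrix.mul_assoc, h]
  have key : (M * X - M)ᵀ * (M * X - M) = 0 := by
    rw [Matrix.transpose_sub, Matrix.transpose_mul, Matrix.sub_mul, Matrix.mul_sub,
      Matrix.mul_sub, a1, a2, a3]
    abel
  rw [← Matrix.conjTranspose_eq_transpose_of_trivial] at key
  have := Matrix.conjTranspose_mul_self_eq_zero.1 key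
  exact sub_eq_zero.mp this

/-- Core computation for the knockoff construction, with the inverse `Gi` abstract. -/
lemma knockoff_core {E m : Type*} [Fintype E] [Fintype m] [DecidableEq m]
    (A Q : Matrix E m ℝ) (K : Matrix E E ℝ) (Gi D C : Matrix m m ℝ)
    (hKs : Kᵀ = K) (hKK : K * K = K)
    (hGGi : Aᵀ * K * A * Gi = 1) (hGiG : Gi * (Aᵀ * K * A) = 1) (hGis : Giᵀ = Gi)
    (hDs : Dᵀ = D)
    (hQorth : Qᵀ * Q = 1) (hQA : Aᵀ * Q = 0) (hQK : Qᵀ * K = Qᵀ)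
    (hC : Cᵀ * C = D + D - D * Gi * D) :
    (A - K * A * Gi * D + Q * C)ᵀ * (A - K * A * Gi * D + Q * C) = Aᵀ * A := by
  have hQA' : Qᵀ * A = 0 := by
    have h' := congrArg Matrix.transpose hQA
    simpa [Matrix.transpose_mul] using h'
  have hKQ : K * Q = Q := by
    have h' := congrArg Matrix.transpose hQK
    simpa [Matrix.transpose_mul, hKs] using h'
  have hGiG' : Gi * (Aᵀ * (K * A)) = 1 := by
    simpa only [Matrix.mul_assoc] using hGiG
  have hKK' : ∀ (X : Matrix E m ℝ), K * (K * X) = K * X := fun X => by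
    rw [← Matrix.mul_assoc, hKK]
  have hQK' : ∀ (X : Matrix E m ℝ), Qᵀ * (K * X) = Qᵀ * X := fun X => by
    rw [← Matrix.mul_assoc, hQK]
  have e1 : D * (Gi * (Aᵀ * (K * A))) = D := by rw [hGiG', Matrix.mul_one]
  have e2 : Cᵀ * (Qᵀ * A) = 0 := by rw [hQA', Matrix.mul_zero]
  have e3 : Aᵀ * (K * (A * (Gi * D))) = D := by
    calc Aᵀ * (K * (A * (Gi * D))) = Aᵀ * K * A * Gi * D := by simp only [Matrix.mul_assoc]
      _ = D := by rw [hGGi, Matrix.one_mul]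
  have e4 : D * (Gi * (Aᵀ * (K * (K * (A * (Gi * D)))))) = D * (Gi * D) := by
    rw [hKK', e3]
  have e5 : Cᵀ * (Qᵀ * (K * (A * (Gi * D)))) = 0 := by
    rw [hQK', ← Matrix.mul_assoc Qᵀ, hQA', Matrix.zero_mul, Matrix.mul_zero]
  have e6 : Aᵀ * (Q * C) = 0 := by rw [← Matrix.mul_assoc, hQA, Matrix.zero_mul]
  have e7 : D * (Gi * (Aᵀ * (K * (Q * C)))) = 0 := by
    rw [← Matrix.mul_assoc K, hKQ, e6, Matrix.mul_zero, Matrix.mul_zero]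
  have e8 : Cᵀ * (Qᵀ * (Q * C)) = Cᵀ * C := by
    rw [← Matrix.mul_assoc Qᵀ, hQorth, Matrix.one_mul]
  have hC' : Cᵀ * C = D + D - D * (Gi * D) := by
    simpa only [Matrix.mul_assoc] using hC
  simp only [Matrix.transpose_add, Matrix.transpose_sub, Matrix.transpose_mul, hKs, hGis, hDs,
    Matrix.add_mul, Matrix.mul_add, Matrix.sub_mul, Matrix.mul_sub, Matrix.mul_assoc]
  rw [e1, e2, e3, e4, e5, e6, e7, e8, hC']
  abel

/-- Knockoff feature construction: `Ã := A − (I−H)A(Aᵀ(I−H)A)⁻¹ diag(s) + QC`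
satisfies the knockoff conditions, where `H = δ₀ (δ₀ᵀδ₀)⁺ δ₀ᵀ` is expressed via a
matrix `P` satisfying the four Moore–Penrose conditions for `δ₀ᵀδ₀`. -/
theorem knockoff_construction
    {E n m : Type*} [Fintype E] [DecidableEq E] [Fintype n] [Fintype m] [DecidableEq m]
    (A : Matrix E m ℝ) (δ0 : Matrix E n ℝ) (s : m → ℝ)
    (P : Matrix n n ℝ)
    (hP1 : δ0ᵀ * δ0 * P * (δ0ᵀ * δ0) = δ0ᵀ * δ0)
    (hP2 : P * (δ0ᵀ * δ0) * P = P)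
    (hP3 : (δ0ᵀ * δ0 * P)ᵀ = δ0ᵀ * δ0 * P)
    (hP4 : (P * (δ0ᵀ * δ0))ᵀ = P * (δ0ᵀ * δ0))
    (H : Matrix E E ℝ) (hH : H = δ0 * P * δ0ᵀ)
    (hGinv : IsUnit (Aᵀ * (1 - H) * A))
    (Q : Matrix E m ℝ) (hQorth : Qᵀ * Q = 1)
    (hQδ : δ0ᵀ * Q = 0) (hQA : Aᵀ * Q = 0)
    (C : Matrix m m ℝ)
    (hC : Cᵀ * C = 2 • Matrix.diagonal s
        - Matrix.diagonal s * (Aᵀ * (1 - H) * A)⁻¹ * Matrix.diagonal s)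
    (Atil : Matrix E m ℝ)
    (hAtil : Atil = A - (1 - H) * A * (Aᵀ * (1 - H) * A)⁻¹ * Matrix.diagonal s + Q * C) :
    Atilᵀ * Atil = Aᵀ * A ∧
    Aᵀ * Atil = Aᵀ * A - Matrix.diagonal s ∧
    δ0ᵀ * Atil = δ0ᵀ * A := by
  -- transpose of hP1
  have hP1' : δ0ᵀ * δ0 * Pᵀ * (δ0ᵀ * δ0) = δ0ᵀ * δ0 := by
    have h' := congrArg Matrix.transpose hP1
    simp only [Matrix.transpose_mul, Matrix.transpose_transpose] at h'
    calc δ0ᵀ * δ0 * Pᵀ * (δ0ᵀ * δ0)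
        = δ0ᵀ * δ0 * Pᵀ * δ0ᵀ * δ0 := by simp only [Matrix.mul_assoc]
      _ = δ0ᵀ * δ0 := by
          simp only [Matrix.mul_assoc] at h' ⊢
          exact h'
  -- projector identities
  have h1 : δ0 * (P * (δ0ᵀ * δ0)) = δ0 := by
    apply knockoff_mul_cancel_one
    rw [← Matrix.mul_assoc, hP1]
  have h1' : δ0 * (Pᵀ * (δ0ᵀ * δ0)) = δ0 := by
    apply knockoff_mul_cancel_one
    rw [← Matrix.mul_assoc, hP1']
  have h2 : δ0ᵀ * δ0 * (Pᵀ * δ0ᵀ) = δ0ᵀ := by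
    have h' := congrArg Matrix.transpose h1
    simp only [Matrix.transpose_mul, Matrix.transpose_transpose] at h'
    simp only [Matrix.mul_assoc] at h' ⊢
    exact h'
  have h2' : δ0ᵀ * δ0 * (P * δ0ᵀ) = δ0ᵀ := by
    have h' := congrArg Matrix.transpose h1'
    simp only [Matrix.transpose_mul, Matrix.transpose_transpose] at h'
    simp only [Matrix.mul_assoc] at h' ⊢
    exact h'
  have hHδ : H * δ0 = δ0 := by
    rw [hH]
    calc δ0 * P * δ0ᵀ * δ0 = δ0 * (P * (δ0ᵀ * δ0)) := by simp only [Matrix.mul_assoc]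
      _ = δ0 := h1
  have hδH : δ0ᵀ * H = δ0ᵀ := by
    rw [hH]
    calc δ0ᵀ * (δ0 * P * δ0ᵀ) = δ0ᵀ * δ0 * (P * δ0ᵀ) := by simp only [Matrix.mul_assoc]
      _ = δ0ᵀ := h2'
  have hHs : Hᵀ = H := by
    have key : δ0 * (Pᵀ * δ0ᵀ) = δ0 * (P * δ0ᵀ) := by
      apply knockoff_mul_cancel
      calc δ0ᵀ * δ0 * (Pᵀ * δ0ᵀ) = δ0ᵀ := h2
        _ = δ0ᵀ * δ0 * (P * δ0ᵀ) := h2'.symm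
    calc Hᵀ = δ0 * (Pᵀ * δ0ᵀ) := by
          rw [hH]; simp only [Matrix.transpose_mul, Matrix.transpose_transpose,
            Matrix.mul_assoc]
      _ = δ0 * (P * δ0ᵀ) := key
      _ = H := by rw [hH, Matrix.mul_assoc]
  have hHH : H * H = H := by
    nth_rewrite 2 [hH]
    calc H * (δ0 * P * δ0ᵀ) = H * δ0 * (P * δ0ᵀ) := by simp only [Matrix.mul_assoc]
      _ = δ0 * (P * δ0ᵀ) := by rw [hHδ]
      _ = H := by rw [hH, Matrix.mul_assoc]
  -- K := 1 - H facts
  have hKs : (1 - H)ᵀ = 1 - H := by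
    rw [Matrix.transpose_sub, Matrix.transpose_one, hHs]
  have hKK : (1 - H) * (1 - H) = 1 - H := by
    simp [Matrix.mul_sub, Matrix.sub_mul, hHH]
  have hδK : δ0ᵀ * (1 - H) = 0 := by
    rw [Matrix.mul_sub, Matrix.mul_one, hδH, sub_self]
  have hQH : Qᵀ * H = 0 := by
    have hq : Qᵀ * δ0 = 0 := by
      have h' := congrArg Matrix.transpose hQδ
      simpa [Matrix.transpose_mul] using h'
    rw [hH]
    calc Qᵀ * (δ0 * P * δ0ᵀ) = Qᵀ * δ0 * (P * δ0ᵀ) := by simp only [Matrix.mul_assoc]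
      _ = 0 := by rw [hq, Matrix.zero_mul]
  have hQK : Qᵀ * (1 - H) = Qᵀ := by
    rw [Matrix.mul_sub, Matrix.mul_one, hQH, sub_zero]
  -- invertibility facts
  have hGdet : IsUnit (Aᵀ * (1 - H) * A).det := by
    rw [← Matrix.isUnit_iff_isUnit_det]; exact hGinv
  have hGGi : Aᵀ * (1 - H) * A * (Aᵀ * (1 - H) * A)⁻¹ = 1 :=
    Matrix.mul_nonsing_inv _ hGdet
  have hGiG : (Aᵀ * (1 - H) * A)⁻¹ * (Aᵀ * (1 - H) * A) = 1 :=
    Matrix.nonsing_inv_mul _ hGdet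
  have hGs : (Aᵀ * (1 - H) * A)ᵀ = Aᵀ * (1 - H) * A := by
    rw [Matrix.transpose_mul, Matrix.transpose_mul, hKs, Matrix.transpose_transpose,
      Matrix.mul_assoc]
  have hGis : ((Aᵀ * (1 - H) * A)⁻¹)ᵀ = (Aᵀ * (1 - H) * A)⁻¹ := by
    rw [Matrix.transpose_nonsing_inv, hGs]
  have hDs : (Matrix.diagonal s)ᵀ = Matrix.diagonal s := Matrix.diagonal_transpose s
  have hC' : Cᵀ * C = Matrix.diagonal s + Matrix.diagonal s
      - Matrix.diagonal s * (Aᵀ * (1 - H) * A)⁻¹ * Matrix.diagonal s := by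
    rw [hC, two_smul]
  refine ⟨?_, ?_, ?_⟩
  · rw [hAtil]
    exact knockoff_core A Q (1 - H) (Aᵀ * (1 - H) * A)⁻¹ (Matrix.diagonal s) C
      hKs hKK hGGi hGiG hGis hDs hQorth hQA hQK hC'
  · rw [hAtil, Matrix.mul_add, Matrix.mul_sub]
    have e1 : Aᵀ * ((1 - H) * A * (Aᵀ * (1 - H) * A)⁻¹ * Matrix.diagonal s)
        = Matrix.diagonal s := by
      calc Aᵀ * ((1 - H) * A * (Aᵀ * (1 - H) * A)⁻¹ * Matrix.diagonal s)
          = Aᵀ * (1 - H) * A * (Aᵀ * (1 - H) * A)⁻¹ * Matrix.diagonal s := by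
            simp only [Matrix.mul_assoc]
        _ = Matrix.diagonal s := by rw [hGGi, Matrix.one_mul]
    have e2 : Aᵀ * (Q * C) = 0 := by
      rw [← Matrix.mul_assoc, hQA, Matrix.zero_mul]
    rw [e1, e2, add_zero]
  · rw [hAtil, Matrix.mul_add, Matrix.mul_sub]
    have e1 : δ0ᵀ * ((1 - H) * A * (Aᵀ * (1 - H) * A)⁻¹ * Matrix.diagonal s) = 0 := by
      calc δ0ᵀ * ((1 - H) * A * (Aᵀ * (1 - H) * A)⁻¹ * Matrix.diagonal s)
          = δ0ᵀ * (1 - H) * (A * ((Aᵀ * (1 - H) * A)⁻¹ * Matrix.diagonal s)) := by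
            simp only [Matrix.mul_assoc]
        _ = 0 := by rw [hδK, Matrix.zero_mul]
    have e2 : δ0ᵀ * (Q * C) = 0 := by
      rw [← Matrix.mul_assoc, hQδ, Matrix.zero_mul]
    rw [e1, e2, add_zero, sub_zero]
end

section
/- Let A be an N×m real matrix, H an orthogonal projection on ℝ^N, and suppose Aᵀ(I−H)A is invertible. If s ∈ ℝ^m satisfies diag(s) ⪯ 2Aᵀ(I−H)A (Loewner order) and 0 ≤ sⱼ, then the matrix 2·diag(s) − diag(s)(Aᵀ(I−H)A)⁻¹diag(s) is positive semidefinite, hence admits a factorization CᵀC for some m×m matrix C. -/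
/-!
Write `G = Aᵀ(I−H)A`, `D = diag(s)` and `Z = G⁻¹D`. Since `G` and `D` are symmetric,
`Zᵀ G Z = D G⁻¹ D = Zᵀ D = D Z`, and expanding gives
`2D − D G⁻¹ D = ½ (Z − 2)ᵀ D (Z − 2) + ½ Zᵀ (2G − D) Z`,
a sum of two congruences of positive semidefinite matrices. A positive semidefinite
matrix is a `CᵀC` by the C⋆-algebra structure on matrices.
-/

open Matrix
open scoped ComplexOrder

namespace Matrix

variable {n 𝕜 : Type*} [Fintype n] [DecidableEq n] [RCLike 𝕜]

lemma two_smul_sub_mul_inv_mul_eq {G D : Matrix n n 𝕜} (hG : G.IsHermitian) (hGu : IsUnit G)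
    (hD : D.IsHermitian) :
    2 • D - D * G⁻¹ * D =
      (G⁻¹ * D - 2)ᴴ * ((2⁻¹ : 𝕜) • D) * (G⁻¹ * D - 2)
        + (G⁻¹ * D)ᴴ * ((2⁻¹ : 𝕜) • (2 • G - D)) * (G⁻¹ * D) := by
  have hGZ : G * (G⁻¹ * D) = D := by
    rw [← Matrix.mul_assoc, mul_nonsing_inv G ((isUnit_iff_isUnit_det G).mp hGu), Matrix.one_mul]
  have hZ : (G⁻¹ * D)ᴴ = D * G⁻¹ := by
    rw [conjTranspose_mul, conjTranspose_nonsing_inv, hD.eq, hG.eq]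
  simp only [conjTranspose_sub, conjTranspose_ofNat, hZ, sub_mul, mul_sub, smul_mul_assoc,
    mul_smul_comm, mul_two, two_mul, add_mul, Matrix.mul_assoc, hGZ]
  module

theorem PosSemidef.two_smul_sub_mul_inv_mul {G D : Matrix n n 𝕜} (hG : G.IsHermitian)
    (hGu : IsUnit G) (hD : D.PosSemidef) (hGD : (2 • G - D).PosSemidef) :
    (2 • D - D * G⁻¹ * D).PosSemidef := by
  rw [two_smul_sub_mul_inv_mul_eq hG hGu hD.isHermitian]
  have h2 : (0 : 𝕜) ≤ 2⁻¹ := by positivity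
  exact ((hD.smul h2).conjTranspose_mul_mul_same _).add
    ((hGD.smul h2).conjTranspose_mul_mul_same _)

theorem PosSemidef.exists_eq_conjTranspose_mul_self {A : Matrix n n 𝕜} (hA : A.PosSemidef) :
    ∃ B : Matrix n n 𝕜, A = Bᴴ * B := by
  open scoped MatrixOrder in
  exact CStarAlgebra.nonneg_iff_eq_star_mul_self.mp hA.nonneg

end Matrix

theorem knockoff_C_exists_general
    {N m : Type*} [Fintype N] [DecidableEq N] [Fintype m] [DecidableEq m]
    (H : Matrix N N ℝ) (hHsym : Hᵀ = H)
    (A : Matrix N m ℝ) (s : m → ℝ)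
    (hGinv : IsUnit (Aᵀ * (1 - H) * A))
    (hs : ∀ j, 0 ≤ s j)
    (hLoewner : (2 • (Aᵀ * (1 - H) * A) - Matrix.diagonal s).PosSemidef) :
    (2 • Matrix.diagonal s
      - Matrix.diagonal s * (Aᵀ * (1 - H) * A)⁻¹ * Matrix.diagonal s).PosSemidef ∧
    ∃ C : Matrix m m ℝ,
      Cᵀ * C = 2 • Matrix.diagonal s
        - Matrix.diagonal s * (Aᵀ * (1 - H) * A)⁻¹ * Matrix.diagonal s := by
  have hG : (Aᵀ * (1 - H) * A).IsHermitian := by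
    simpa only [conjTranspose_eq_transpose_of_trivial] using
      isHermitian_conjTranspose_mul_mul A (show (1 - H).IsHermitian by
        rw [IsHermitian, conjTranspose_eq_transpose_of_trivial, transpose_sub, transpose_one, hHsym])
  have hD : (diagonal s).PosSemidef := posSemidef_diagonal_iff.mpr hs
  have hPSD := hD.two_smul_sub_mul_inv_mul hG hGinv hLoewner
  obtain ⟨C, hC⟩ := hPSD.exists_eq_conjTranspose_mul_self
  exact ⟨hPSD, C, by rw [hC, conjTranspose_eq_transpose_of_trivial]⟩

/-- If `diag(s) ⪯ 2Aᵀ(I−H)A` (Loewner order), `s ≥ 0`, and `Aᵀ(I−H)A` is invertible,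
then `2 diag(s) − diag(s)(Aᵀ(I−H)A)⁻¹ diag(s)` is positive semidefinite, hence admits
a factorization `CᵀC`. -/
theorem knockoff_C_exists
    {N m : Type*} [Fintype N] [DecidableEq N] [Fintype m] [DecidableEq m]
    (H : Matrix N N ℝ) (hHsym : Hᵀ = H) (hHidem : H * H = H)
    (A : Matrix N m ℝ) (s : m → ℝ)
    (hGinv : IsUnit (Aᵀ * (1 - H) * A))
    (hs : ∀ j, 0 ≤ s j)
    (hLoewner : (2 • (Aᵀ * (1 - H) * A) - Matrix.diagonal s).PosSemidef) :
    (2 • Matrix.diagonal s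
      - Matrix.diagonal s * (Aᵀ * (1 - H) * A)⁻¹ * Matrix.diagonal s).PosSemidef ∧
    ∃ C : Matrix m m ℝ,
      Cᵀ * C = 2 • Matrix.diagonal s
        - Matrix.diagonal s * (Aᵀ * (1 - H) * A)⁻¹ * Matrix.diagonal s :=
  knockoff_C_exists_general H hHsym A s hGinv hs hLoewner
end

section
/- In the setting of Theorem 2: let X = U₂ᵀA where U₂ has orthonormal columns spanning col(δ₀)^⊥, let X̃ satisfy X̃ᵀX̃ = XᵀX and XᵀX̃ = XᵀX − diag(s). Define B = A + U₂(X̃ − X). Then B satisfies BᵀB = AᵀA, AᵀB = AᵀA − diag(s), and δ₀ᵀB = δ₀ᵀA; i.e., B is a valid knockoff feature matrix for the extended model. -/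
open Matrix

/-- Forward direction of Theorem 2: if `X̃` is a knockoff feature matrix for the
reduced model with `X = U₂ᵀA`, then `B = A + U₂(X̃ − X)` is a valid knockoff
feature matrix for the full model. -/
theorem knockoff_lift
    {E n m k : Type*} [Fintype E] [Fintype n] [Fintype m] [DecidableEq m]
    [Fintype k] [DecidableEq k]
    (δ0 : Matrix E n ℝ) (A : Matrix E m ℝ) (U2 : Matrix E k ℝ)
    (hU2orth : U2ᵀ * U2 = 1)
    (hU2ker : δ0ᵀ * U2 = 0)
    (s : m → ℝ)
    (X : Matrix k m ℝ) (hX : X = U2ᵀ * A)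
    (Xtil : Matrix k m ℝ)
    (hXtil1 : Xtilᵀ * Xtil = Xᵀ * X)
    (hXtil2 : Xᵀ * Xtil = Xᵀ * X - Matrix.diagonal s)
    (B : Matrix E m ℝ) (hB : B = A + U2 * (Xtil - X)) :
    Bᵀ * B = Aᵀ * A ∧
    Aᵀ * B = Aᵀ * A - Matrix.diagonal s ∧
    δ0ᵀ * B = δ0ᵀ * A := by
  set D := Xtil - X with hD
  have hAU : Aᵀ * U2 = Xᵀ := by rw [hX, transpose_mul, transpose_transpose]
  have hUA : U2ᵀ * A = X := hX.symm
  -- Aᵀ * (U2 * D) = -diagonal s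
  have h1 : Aᵀ * (U2 * D) = -(Matrix.diagonal s) := by
    rw [← Matrix.mul_assoc, hAU, hD, Matrix.mul_sub, hXtil2]
    abel
  -- Xtilᵀ * X = Xᵀ * X - diagonal s
  have hXtil2' : Xtilᵀ * X = Xᵀ * X - Matrix.diagonal s := by
    have := congrArg Matrix.transpose hXtil2
    simpa [transpose_mul, transpose_sub, Matrix.diagonal_transpose,
      Matrix.transpose_mul] using this
  -- (U2 * D)ᵀ * (U2 * D) = Dᵀ * D = 2 • diagonal s
  have h2 : (U2 * D)ᵀ * (U2 * D) = Matrix.diagonal s + Matrix.diagonal s := by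
    rw [transpose_mul, Matrix.mul_assoc, ← Matrix.mul_assoc U2ᵀ, hU2orth,
      Matrix.one_mul, hD, transpose_sub, Matrix.sub_mul, Matrix.mul_sub,
      Matrix.mul_sub, hXtil1, hXtil2, hXtil2']
    abel
  -- (U2 * D)ᵀ * A = -diagonal s
  have h3 : (U2 * D)ᵀ * A = -(Matrix.diagonal s) := by
    rw [transpose_mul, Matrix.mul_assoc, hUA, hD, transpose_sub,
      Matrix.sub_mul, hXtil2']
    abel
  refine ⟨?_, ?_, ?_⟩
  · rw [hB, transpose_add, Matrix.add_mul, Matrix.mul_add, Matrix.mul_add,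
      h1, h2, h3]
    abel
  · rw [hB, Matrix.mul_add, h1]
    abel
  · rw [hB, Matrix.mul_add, ← Matrix.mul_assoc, hU2ker, Matrix.zero_mul,
      add_zero]
end

section
/- Let W₁, …, W_m be random variables such that for each j in a ('null') set S₀ ⊆ {1,…,m}, the sign of W_j is an independent fair coin flip conditional on (|W₁|, …, |W_m|) and on (sign(W_j))_{j ∉ S₀}. Define, for threshold t > 0 and target level q ∈ [0,1], T = min{ t : (1 + #{j : W_j ≤ −t}) / max(#{j : W_j ≥ t}, 1) ≤ q } and Ŝ = {j : W_j ≥ T}. Then E[ #(Ŝ ∩ S₀) / max(#Ŝ, 1) ] ≤ q. -/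
/-!
Flipping the signs of any set of nulls leaves the law of `W` unchanged, so the expected FDP equals
the expectation of its average over the `2 ^ #S₀` sign patterns of the nulls, with the magnitudes
and the non-null signs held fixed. For each pattern the knockoff+ rule gives
`FDP ≤ q · V⁺(T) / (1 + V⁻(T))`, where `V⁺(t)` and `V⁻(t)` count the nulls with `W_j ≥ t` and
`W_j ≤ -t`. Raising the threshold reveals the signs of the nulls one magnitude at a time, and `T`
is a stopping time for this filtration enlarged by the total number of negative nulls. The average
of `V⁺ / (1 + V⁻)` at such a stopping time is at most `1` (optional stopping for the
supermartingale of Barber and Candès); here this is proved by induction on the number of nulls,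
for a fixed number `k` of negative signs, where the bound is `choose n (k + 1)`.
-/

open MeasureTheory
open scoped Classical

/-- Candidate thresholds: attained magnitudes `t = |W_j| > 0` at which the knockoff
estimate of FDP, `(c + #{j : W_j ≤ −t}) / max(#{j : W_j ≥ t}, 1)`, is at most `q`
(`c = 1` for knockoff+, `c = 0` for knockoff). -/
noncomputable def knockoffCandidates (c q : ℝ) {m : ℕ} (w : Fin m → ℝ) : Finset ℝ :=
  (Finset.univ.image fun j => |w j|).filter fun t =>
    0 < t ∧ (c + ((Finset.univ.filter fun j => w j ≤ -t).card : ℝ)) /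
        max ((Finset.univ.filter fun j => t ≤ w j).card : ℝ) 1 ≤ q

/-- The knockoff selected set `Ŝ = {j : W_j ≥ T}`, where `T` is the smallest candidate
threshold; if no threshold qualifies (`T = +∞`), the selected set is empty. -/
noncomputable def knockoffSelect (c q : ℝ) {m : ℕ} (w : Fin m → ℝ) : Finset (Fin m) :=
  if h : (knockoffCandidates c q w).Nonempty then
    Finset.univ.filter fun j => (knockoffCandidates c q w).min' h ≤ w j
  else ∅

open Finset

section OptionalStopping

variable {α β : Type*} [LinearOrder β]

/-- Read `P ⊆ S` as the set of negative signs and `a` as the magnitudes: `τ` is a stopping time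
for the filtration that reveals `#P` and, as the threshold rises, which elements below it lie
in `P`. -/
def IsStoppingThreshold (S : Finset α) (a : α → β) (τ : Finset α → β) : Prop :=
  ∀ P ⊆ S, ∀ P' ⊆ S, #P' = #P → (∀ i ∈ S, a i < τ P → (i ∈ P' ↔ i ∈ P)) → τ P' = τ P

theorem isStoppingThreshold_min {S : Finset α} {a : α → β} {C : Finset α → Finset β}
    (hC : ∀ P ⊆ S, ∀ P' ⊆ S, #P' = #P → ∀ t,
      (∀ i ∈ S, a i < t → (i ∈ P' ↔ i ∈ P)) → (t ∈ C P' ↔ t ∈ C P)) :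
    IsStoppingThreshold S (fun i => (a i : WithTop β)) fun P => (C P).min := by
  intro P hP P' hP' hcard hagree
  change (C P').min = (C P).min
  have hbelow : ∀ t : β, (t : WithTop β) ≤ (C P).min → (t ∈ C P' ↔ t ∈ C P) :=
    fun t ht => hC P hP P' hP' hcard t fun i hi hlt =>
      hagree i hi ((WithTop.coe_lt_coe.2 hlt).trans_le ht)
  apply le_antisymm
  · cases h : (C P).min with
    | top => exact le_top
    | coe t => exact min_le ((hbelow t h.ge).2 (mem_of_min h))
  · cases h : (C P').min with
    | top => exact le_top
    | coe t =>
      by_contra hlt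
      exact hlt (min_le ((hbelow t (not_le.1 hlt).le).1 (mem_of_min h)))

theorem card_filter_le_eq_of_agree {a : α → β} {t : β} {P P' : Finset α} (hcard : #P' = #P)
    (hagree : ∀ i, a i < t → (i ∈ P' ↔ i ∈ P)) : #{i ∈ P' | t ≤ a i} = #{i ∈ P | t ≤ a i} := by
  have hsplit : ∀ Q : Finset α, #{i ∈ Q | t ≤ a i} + #{i ∈ Q | a i < t} = #Q := fun Q => by
    simpa only [not_le] using card_filter_add_card_filter_not (s := Q) fun i => t ≤ a i
  have hbelow : ({i ∈ P' | a i < t} : Finset α) = {i ∈ P | a i < t} := by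
    ext i
    simp only [mem_filter]
    exact ⟨fun h => ⟨(hagree i h.2).1 h.1, h.2⟩, fun h => ⟨(hagree i h.2).2 h.1, h.2⟩⟩
  have h' := hsplit P'
  rw [hbelow, hcard, ← hsplit P] at h'
  omega

theorem card_filter_compl_le_eq_of_agree [Fintype α] [DecidableEq α] {a : α → β} {t : β}
    {P P' : Finset α} (hcard : #P' = #P) (hagree : ∀ i, a i < t → (i ∈ P' ↔ i ∈ P)) :
    #{i ∈ P'ᶜ | t ≤ a i} = #{i ∈ Pᶜ | t ≤ a i} := by
  have hcompl : ∀ Q : Finset α, #{i ∈ Qᶜ | t ≤ a i} = #{i | t ≤ a i} - #{i ∈ Q | t ≤ a i} :=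
    fun Q => by
      rw [← card_sdiff_of_subset (filter_subset_filter _ (subset_univ Q))]
      congr 1
      ext i
      simp only [mem_sdiff, mem_filter, mem_univ, mem_compl, true_and]
      tauto
  rw [hcompl, hcompl, card_filter_le_eq_of_agree hcard hagree]

variable [DecidableEq α]

/-- `V⁺(t) / (1 + V⁻(t))` for the sign pattern whose negative set is `P`. -/
noncomputable def tailRatio (S : Finset α) (a : α → β) (P : Finset α) (t : β) : ℝ :=
  #{i ∈ S \ P | t ≤ a i} / (1 + #{i ∈ P | t ≤ a i})

theorem tailRatio_of_forall_le {S P : Finset α} {a : α → β} {t : β} (hP : P ⊆ S)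
    (ht : ∀ i ∈ S, t ≤ a i) : tailRatio S a P t = ((#S - #P : ℕ) : ℝ) / (1 + #P) := by
  rw [tailRatio, filter_true_of_mem fun i hi => ht i (sdiff_subset hi),
    filter_true_of_mem fun i hi => ht i (hP hi), card_sdiff_of_subset hP]

theorem tailRatio_insert_of_lt {S P : Finset α} {a : α → β} {t : β} {i : α} (hi : i ∉ S)
    (hP : P ⊆ S) (ht : a i < t) : tailRatio (insert i S) a P t = tailRatio S a P t := by
  have hiP : i ∉ P := fun h => hi (hP h)
  rw [tailRatio, tailRatio, insert_sdiff_of_notMem _ hiP, filter_insert, if_neg (not_le.2 ht)]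

theorem tailRatio_insert_insert_of_lt {S P : Finset α} {a : α → β} {t : β} {i : α} (hi : i ∉ S)
    (ht : a i < t) : tailRatio (insert i S) a (insert i P) t = tailRatio S a P t := by
  rw [tailRatio, tailRatio, insert_sdiff_insert, sdiff_insert_of_notMem hi, filter_insert,
    if_neg (not_le.2 ht)]

namespace IsStoppingThreshold

variable {S : Finset α} {a : α → β} {τ : Finset α → β} {i : α}

theorem of_insert (hτ : IsStoppingThreshold (insert i S) a τ) (hi : i ∉ S) :
    IsStoppingThreshold S a τ := by
  intro P hP P' hP' hcard hagree
  refine hτ P (hP.trans (subset_insert i S)) P' (hP'.trans (subset_insert i S)) hcard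
    fun j hj hlt => ?_
  rcases mem_insert.1 hj with rfl | hj
  · exact iff_of_false (fun h => hi (hP' h)) fun h => hi (hP h)
  · exact hagree j hj hlt

theorem insert (hτ : IsStoppingThreshold (insert i S) a τ) (hi : i ∉ S) :
    IsStoppingThreshold S a fun P => τ (insert i P) := by
  intro P hP P' hP' hcard hagree
  refine hτ _ (insert_subset_insert i hP) _ (insert_subset_insert i hP') ?_ fun j hj hlt => ?_
  · rw [card_insert_of_notMem fun h => hi (hP' h), card_insert_of_notMem fun h => hi (hP h),
      hcard]
  · rcases mem_insert.1 hj with rfl | hj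
    · simp
    · simp only [mem_insert, hagree j hj hlt]

end IsStoppingThreshold

theorem cast_choose_mul_sub_div (n k : ℕ) :
    (n.choose k : ℝ) * ((n - k : ℕ) / (1 + k)) = n.choose (k + 1) := by
  have h := Nat.choose_succ_right_eq n k
  rw [mul_div_assoc', div_eq_iff (by positivity)]
  exact_mod_cast (by rw [← h]; ring)

theorem sum_powersetCard_tailRatio_eq_of_le {S : Finset α} {a : α → β} {τ : Finset α → β}
    (hτ : IsStoppingThreshold S a τ) {k : ℕ} {P₀ : Finset α} (hP₀ : P₀ ∈ S.powersetCard k)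
    (hτP₀ : ∀ j ∈ S, τ P₀ ≤ a j) :
    ∑ P ∈ S.powersetCard k, tailRatio S a P (τ P) = (#S).choose (k + 1) := by
  rw [mem_powersetCard] at hP₀
  calc ∑ P ∈ S.powersetCard k, tailRatio S a P (τ P)
      = ∑ P ∈ S.powersetCard k, ((#S - k : ℕ) : ℝ) / (1 + k) := sum_congr rfl fun P hP => by
        rw [mem_powersetCard] at hP
        have hτP : τ P = τ P₀ := hτ P₀ hP₀.1 P hP.1 (hP.2.trans hP₀.2.symm)
          fun j hj hlt => absurd (hτP₀ j hj) (not_le.2 hlt)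
        rw [hτP, tailRatio_of_forall_le hP.1 hτP₀, hP.2]
    _ = (#S).choose (k + 1) := by
        rw [sum_const, card_powersetCard, nsmul_eq_mul, cast_choose_mul_sub_div]

theorem sum_powersetCard_succ_insert {M : Type*} [AddCommMonoid M] {s : Finset α} {i : α}
    (hi : i ∉ s) (k : ℕ) (f : Finset α → M) :
    ∑ P ∈ (insert i s).powersetCard (k + 1), f P
      = ∑ P ∈ s.powersetCard (k + 1), f P + ∑ P ∈ s.powersetCard k, f (insert i P) := by
  rw [powersetCard_succ_insert hi, sum_union, sum_image]
  · intro P hP Q hQ hPQ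
    rw [← erase_insert fun h => hi ((mem_powersetCard.1 hP).1 h),
      ← erase_insert fun h => hi ((mem_powersetCard.1 hQ).1 h), hPQ]
  · refine disjoint_left.2 fun P hP hP' => ?_
    obtain ⟨Q, -, rfl⟩ := mem_image.1 hP'
    exact hi ((mem_powersetCard.1 hP).1 (mem_insert_self i Q))

theorem sum_powersetCard_succ_tailRatio_insert {S : Finset α} {a : α → β} {τ : Finset α → β}
    {i : α} (hi : i ∉ S) {k : ℕ} (hlate : ∀ P ∈ (insert i S).powersetCard (k + 1), a i < τ P) :
    ∑ P ∈ (insert i S).powersetCard (k + 1), tailRatio (insert i S) a P (τ P)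
      = ∑ P ∈ S.powersetCard k, tailRatio S a P (τ (insert i P))
        + ∑ P ∈ S.powersetCard (k + 1), tailRatio S a P (τ P) := by
  rw [sum_powersetCard_succ_insert hi, add_comm]
  congr 1 <;> refine sum_congr rfl fun P hP => ?_
  · refine tailRatio_insert_insert_of_lt hi (hlate _ (mem_powersetCard.2 ⟨?_, ?_⟩))
    · exact insert_subset_insert i (mem_powersetCard.1 hP).1
    · rw [card_insert_of_notMem fun h => hi ((mem_powersetCard.1 hP).1 h),
        (mem_powersetCard.1 hP).2]
  · exact tailRatio_insert_of_lt hi (mem_powersetCard.1 hP).1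
      (hlate P (powersetCard_mono (subset_insert i S) hP))

theorem sum_powersetCard_tailRatio_le (S : Finset α) (a : α → β) (τ : Finset α → β)
    (hτ : IsStoppingThreshold S a τ) (k : ℕ) :
    ∑ P ∈ S.powersetCard k, tailRatio S a P (τ P) ≤ (#S).choose (k + 1) := by
  induction S using Finset.strongInduction generalizing τ k with
  | H S ih =>
    rcases S.eq_empty_or_nonempty with rfl | hne
    · simp [tailRatio]
    obtain ⟨i, hi, hmin⟩ := S.exists_min_image a hne
    -- Either some pattern with `k` negatives stops at or below the smallest magnitude, and then
    -- all of them do since nothing has been revealed yet; or none does, and the element of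
    -- smallest magnitude is never counted, so it can be peeled off.
    by_cases hearly : ∃ P₀ ∈ S.powersetCard k, τ P₀ ≤ a i
    · obtain ⟨P₀, hP₀, hτP₀⟩ := hearly
      exact (sum_powersetCard_tailRatio_eq_of_le hτ hP₀ fun j hj => hτP₀.trans (hmin j hj)).le
    push Not at hearly
    obtain ⟨S, hiS, rfl⟩ : ∃ S', i ∉ S' ∧ S = insert i S' :=
      ⟨S.erase i, notMem_erase i S, (insert_erase hi).symm⟩
    have ih' := ih S (ssubset_insert hiS)
    rw [card_insert_of_notMem hiS]
    rcases k with _ | k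
    · rw [powersetCard_zero, sum_singleton,
        tailRatio_insert_of_lt hiS (empty_subset S) (hearly ∅ (by simp))]
      calc tailRatio S a ∅ (τ ∅) ≤ (#S).choose 1 := by
            simpa using ih' τ (hτ.of_insert hiS) 0
        _ ≤ (#S + 1).choose 1 := by exact_mod_cast Nat.choose_le_succ _ _
    · rw [sum_powersetCard_succ_tailRatio_insert hiS hearly, Nat.choose_succ_succ' _ (k + 1),
        Nat.cast_add]
      exact add_le_add (ih' _ (hτ.insert hiS) k) (ih' τ (hτ.of_insert hiS) (k + 1))

theorem sum_range_choose_succ_le (n : ℕ) : ∑ k ∈ range (n + 1), n.choose (k + 1) ≤ 2 ^ n := by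
  rw [← Nat.sum_range_choose, sum_range_succ, Nat.choose_succ_self, add_zero,
    sum_range_succ' (fun k => n.choose k)]
  exact Nat.le_add_right _ _

theorem sum_powerset_tailRatio_le (S : Finset α) (a : α → β) (τ : Finset α → β)
    (hτ : IsStoppingThreshold S a τ) :
    ∑ P ∈ S.powerset, tailRatio S a P (τ P) ≤ 2 ^ #S :=
  calc ∑ P ∈ S.powerset, tailRatio S a P (τ P)
      = ∑ k ∈ range (#S + 1), ∑ P ∈ S.powersetCard k, tailRatio S a P (τ P) := by
        simp only [powersetCard_eq_filter]
        exact (sum_fiberwise_of_maps_to (fun P hP =>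
          mem_range_succ_iff.2 (card_le_card (mem_powerset.1 hP))) _).symm
    _ ≤ ∑ k ∈ range (#S + 1), ((#S).choose (k + 1) : ℝ) :=
        sum_le_sum fun k _ => sum_powersetCard_tailRatio_le S a τ hτ k
    _ ≤ 2 ^ #S := by exact_mod_cast sum_range_choose_succ_le #S

end OptionalStopping

section SignFlip

variable {ι : Type*} [DecidableEq ι]

def signFlip (B : Finset ι) (v : ι → ℝ) : ι → ℝ := fun j => if j ∈ B then -v j else v j

theorem signFlip_eq_ite_mul (B : Finset ι) (v : ι → ℝ) :
    signFlip B v = fun j => (if j ∈ B then -1 else 1) * v j := by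
  funext j
  unfold signFlip
  split_ifs <;> ring

theorem abs_signFlip (B : Finset ι) (v : ι → ℝ) (j : ι) : |signFlip B v j| = |v j| := by
  unfold signFlip; split_ifs <;> simp

theorem signFlip_signFlip (B N : Finset ι) (v : ι → ℝ) :
    signFlip B (signFlip N v) = signFlip (symmDiff B N) v := by
  funext j
  by_cases hB : j ∈ B <;> by_cases hN : j ∈ N <;> simp [signFlip, mem_symmDiff, hB, hN]

theorem sum_powerset_signFlip_signFlip {M : Type*} [AddCommMonoid M] {S N : Finset ι}
    (hN : N ⊆ S) (f : (ι → ℝ) → M) (v : ι → ℝ) :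
    ∑ B ∈ S.powerset, f (signFlip B (signFlip N v)) = ∑ B ∈ S.powerset, f (signFlip B v) := by
  simp_rw [signFlip_signFlip]
  refine sum_nbij' (fun B => symmDiff B N) (fun B => symmDiff B N) (fun B hB => ?_)
    (fun B hB => ?_) (fun B _ => symmDiff_symmDiff_cancel_right N B)
    (fun B _ => symmDiff_symmDiff_cancel_right N B) fun B _ => rfl
  all_goals
    rw [mem_powerset] at hB ⊢
    exact symmDiff_subset_union.trans (union_subset hB hN)

theorem measurable_signFlip (B : Finset ι) : Measurable (signFlip B) :=
  measurable_pi_lambda _ fun j => by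
    unfold signFlip
    split_ifs
    · exact (measurable_pi_apply j).neg
    · exact measurable_pi_apply j

theorem integral_le_of_sum_signFlip_le {Ω : Type*} [MeasurableSpace Ω] {μ : Measure Ω}
    [IsProbabilityMeasure μ] {X : Ω → ι → ℝ} (hX : Measurable X) {S : Finset ι}
    (hinv : ∀ B ⊆ S, μ.map (fun ω => signFlip B (X ω)) = μ.map X)
    {f : (ι → ℝ) → ℝ} (hf : Measurable f) (hfX : Integrable (fun ω => f (X ω)) μ) {c : ℝ}
    (hsum : ∀ v, ∑ B ∈ S.powerset, f (signFlip B v) ≤ 2 ^ #S * c) :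
    ∫ ω, f (X ω) ∂μ ≤ c := by
  have hflipX : ∀ B, Measurable fun ω => signFlip B (X ω) := fun B =>
    (measurable_signFlip B).comp hX
  have hmap : ∀ B ∈ S.powerset, μ.map (fun ω => signFlip B (X ω)) = μ.map X :=
    fun B hB => hinv B (mem_powerset.1 hB)
  have hint : ∀ B ∈ S.powerset, Integrable (fun ω => f (signFlip B (X ω))) μ := fun B hB => by
    refine (integrable_map_measure hf.aestronglyMeasurable (hflipX B).aemeasurable).1 ?_
    rw [hmap B hB]
    exact (integrable_map_measure hf.aestronglyMeasurable hX.aemeasurable).2 hfX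
  have hinvariant : ∀ B ∈ S.powerset, ∫ ω, f (signFlip B (X ω)) ∂μ = ∫ ω, f (X ω) ∂μ :=
    fun B hB => by
      rw [← integral_map (hflipX B).aemeasurable hf.aestronglyMeasurable, hmap B hB,
        integral_map hX.aemeasurable hf.aestronglyMeasurable]
  have hpow : (0 : ℝ) < 2 ^ #S := by positivity
  refine le_of_mul_le_mul_left ?_ hpow
  calc 2 ^ #S * ∫ ω, f (X ω) ∂μ = ∑ B ∈ S.powerset, ∫ ω, f (signFlip B (X ω)) ∂μ := by
        rw [sum_congr rfl hinvariant, sum_const, card_powerset, nsmul_eq_mul, Nat.cast_pow,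
          Nat.cast_ofNat]
    _ = ∫ ω, ∑ B ∈ S.powerset, f (signFlip B (X ω)) ∂μ := (integral_finsetSum _ hint).symm
    _ ≤ ∫ _, 2 ^ #S * c ∂μ := integral_mono (integrable_finsetSum _ hint) (integrable_const _)
        fun ω => hsum (X ω)
    _ = 2 ^ #S * c := by simp

variable [Fintype ι]

theorem card_filter_le_neg_eq {t : ℝ} (ht : 0 < t) (v : ι → ℝ) :
    #{j | v j ≤ -t} = #{j | t ≤ |v j|} - #{j | t ≤ v j} := by
  have hsub : ({j | t ≤ v j} : Finset ι) ⊆ ({j | t ≤ |v j|} : Finset ι) :=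
    fun j hj => by
      simp only [mem_filter, mem_univ, true_and] at hj ⊢
      exact hj.trans (le_abs_self (v j))
  rw [← card_sdiff_of_subset hsub]
  congr 1
  ext j
  simp only [mem_sdiff, mem_filter, mem_univ, true_and, le_abs', not_le]
  constructor
  · intro h; exact ⟨Or.inl h, by linarith⟩
  · rintro ⟨h | h, h'⟩ <;> linarith

theorem filter_le_signFlip {B : Finset ι} {u : ι → ℝ} (hu : ∀ j ∈ B, 0 ≤ u j) {t : ℝ}
    (ht : 0 < t) : ({j | t ≤ signFlip B u j} : Finset ι) = {j ∈ Bᶜ | t ≤ u j} := by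
  ext j
  rw [mem_filter, mem_filter]
  by_cases hj : j ∈ B
  · have := hu j hj
    simp only [signFlip, hj, if_true, mem_compl, not_true_eq_false, false_and, iff_false]
    rintro ⟨-, h⟩
    linarith
  · simp [signFlip, hj]

end SignFlip

theorem measurable_card_filter {X ι : Type*} [MeasurableSpace X] (s : Finset ι)
    {p : X → ι → Prop} [∀ x, DecidablePred (p x)] (hp : ∀ i ∈ s, MeasurableSet {x | p x i}) :
    Measurable fun x => (#{i ∈ s | p x i} : ℝ) := by
  simp_rw [card_filter, Nat.cast_sum, Nat.cast_ite, Nat.cast_one, Nat.cast_zero]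
  exact Finset.measurable_sum _ fun i hi =>
    Measurable.ite (hp i hi) measurable_const measurable_const

theorem div_max_one_le_mul_div {a b d r q : ℝ} (ha : 0 ≤ a) (hb : 0 ≤ b) (hbd : b ≤ d)
    (hq : (1 + d) / max r 1 ≤ q) : a / max r 1 ≤ q * (a / (1 + b)) := by
  have hr : 0 < max r 1 := lt_max_of_lt_right one_pos
  calc a / max r 1 = a / (1 + b) * ((1 + b) / max r 1) := by field_simp
    _ ≤ a / (1 + b) * ((1 + d) / max r 1) := by gcongr
    _ ≤ a / (1 + b) * q := by gcongr
    _ = q * (a / (1 + b)) := mul_comm _ _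

noncomputable def falseDiscoveryProportion {ι : Type*} [DecidableEq ι] (S₀ A : Finset ι) : ℝ :=
  #(A ∩ S₀) / max (#A : ℝ) 1

theorem abs_falseDiscoveryProportion_le_one {ι : Type*} [DecidableEq ι] (S₀ A : Finset ι) :
    |falseDiscoveryProportion S₀ A| ≤ 1 := by
  have hpos : (0 : ℝ) < max (#A : ℝ) 1 := lt_max_of_lt_right one_pos
  rw [falseDiscoveryProportion, abs_of_nonneg (by positivity), div_le_one hpos]
  exact (Nat.cast_le.2 (card_le_card inter_subset_left)).trans (le_max_left _ _)

section Knockoff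

variable {m : ℕ}

/-- The knockoff threshold `T`, with `⊤` for `T = +∞`. -/
noncomputable def knockoffThreshold (c q : ℝ) (w : Fin m → ℝ) : WithTop ℝ :=
  (knockoffCandidates c q w).min

theorem knockoffSelect_eq_filter (c q : ℝ) (w : Fin m → ℝ) :
    knockoffSelect c q w = ({j | knockoffThreshold c q w ≤ w j} : Finset (Fin m)) := by
  unfold knockoffSelect knockoffThreshold
  split_ifs with h
  · simp_rw [← coe_min' h, WithTop.coe_le_coe]
  · rw [not_nonempty_iff_eq_empty.1 h, min_empty]
    simp

theorem mem_knockoffCandidates_image {c q t : ℝ} {w : Fin m → ℝ}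
    (ht : t ∈ knockoffCandidates c q w) : ∃ i, |w i| = t := by
  simpa using (mem_filter.1 ht).1

theorem mem_knockoffSelect_iff {c q : ℝ} {w : Fin m → ℝ} {j : Fin m} :
    j ∈ knockoffSelect c q w ↔ ∃ i, |w i| ∈ knockoffCandidates c q w ∧ |w i| ≤ w j := by
  rw [knockoffSelect_eq_filter, mem_filter, knockoffThreshold]
  constructor
  · rintro ⟨-, hT⟩
    cases h : (knockoffCandidates c q w).min with
    | top => simp [h] at hT
    | coe t =>
      obtain ⟨i, rfl⟩ := mem_knockoffCandidates_image (mem_of_min h)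
      exact ⟨i, mem_of_min h, WithTop.coe_le_coe.1 (h ▸ hT)⟩
  · rintro ⟨i, hi, hle⟩
    exact ⟨mem_univ j, (min_le hi).trans (WithTop.coe_le_coe.2 hle)⟩

theorem mem_knockoffCandidates_congr {c q t : ℝ} {v v' : Fin m → ℝ} (habs : ∀ j, |v j| = |v' j|)
    (hcount : 0 < t → #{j | t ≤ v j} = #{j | t ≤ v' j}) :
    t ∈ knockoffCandidates c q v ↔ t ∈ knockoffCandidates c q v' := by
  have himage : (univ.image fun j => |v j|) = univ.image fun j => |v' j| := by simp_rw [habs]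
  simp only [knockoffCandidates, mem_filter, himage]
  refine and_congr_right fun _ => and_congr_right fun ht => ?_
  rw [card_filter_le_neg_eq ht, card_filter_le_neg_eq ht v', hcount ht]
  simp_rw [habs]

theorem isStoppingThreshold_knockoffThreshold {c q : ℝ} {S : Finset (Fin m)} {u : Fin m → ℝ}
    (hu : ∀ j ∈ S, 0 ≤ u j) :
    IsStoppingThreshold S (fun j => (u j : WithTop ℝ))
      fun B => knockoffThreshold c q (signFlip B u) := by
  refine isStoppingThreshold_min fun B hB B' hB' hcard t hagree => ?_
  refine mem_knockoffCandidates_congr (fun j => by rw [abs_signFlip, abs_signFlip]) fun ht => ?_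
  rw [filter_le_signFlip (fun j hj => hu j (hB' hj)) ht,
    filter_le_signFlip (fun j hj => hu j (hB hj)) ht]
  refine card_filter_compl_le_eq_of_agree hcard fun j hj => ?_
  by_cases hjS : j ∈ S
  · exact hagree j hjS hj
  · exact iff_of_false (fun h => hjS (hB' h)) fun h => hjS (hB h)

theorem falseDiscoveryProportion_knockoffSelect_signFlip_le {q : ℝ} {S : Finset (Fin m)}
    {u : Fin m → ℝ} (hu : ∀ j ∈ S, 0 ≤ u j) {B : Finset (Fin m)} (hB : B ⊆ S) :
    falseDiscoveryProportion S (knockoffSelect 1 q (signFlip B u))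
      ≤ q * tailRatio S (fun j => (u j : WithTop ℝ)) B (knockoffThreshold 1 q (signFlip B u)) := by
  rw [knockoffSelect_eq_filter]
  cases hT : knockoffThreshold 1 q (signFlip B u) with
  | top => simp [falseDiscoveryProportion, tailRatio]
  | coe t =>
    obtain ⟨-, ht, hratio⟩ := mem_filter.1 (mem_of_min hT)
    have hnull : ({j | t ≤ signFlip B u j} : Finset (Fin m)) ∩ S = {j ∈ S \ B | t ≤ u j} := by
      rw [filter_le_signFlip (fun j hj => hu j (hB hj)) ht]
      ext j
      simp only [mem_inter, mem_filter, mem_compl, mem_sdiff]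
      tauto
    have hneg : #{j ∈ B | t ≤ u j} ≤ #{j | signFlip B u j ≤ -t} := card_le_card fun j hj => by
      rw [mem_filter] at hj ⊢
      simpa [signFlip, hj.1] using hj.2
    simp only [falseDiscoveryProportion, tailRatio, WithTop.coe_le_coe, hnull]
    exact div_max_one_le_mul_div (by positivity) (by positivity) (Nat.cast_le.2 hneg) hratio

theorem sum_powerset_falseDiscoveryProportion_knockoffSelect_le {q : ℝ} (hq : 0 ≤ q)
    (S : Finset (Fin m)) (w : Fin m → ℝ) :
    ∑ B ∈ S.powerset, falseDiscoveryProportion S (knockoffSelect 1 q (signFlip B w))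
      ≤ 2 ^ #S * q := by
  -- Re-centred at `u`, whose null coordinates are nonnegative, a flip set is exactly the set of
  -- negative nulls.
  set N : Finset (Fin m) := {j ∈ S | w j < 0}
  set u := signFlip N w
  have hu : ∀ j ∈ S, 0 ≤ u j := fun j hj => by
    by_cases hw : w j < 0
    · simp only [u, signFlip, N, mem_filter, hj, hw, and_self, if_true]
      linarith
    · simp only [u, signFlip, N, mem_filter, hw, and_false, if_false]
      linarith
  rw [← sum_powerset_signFlip_signFlip (filter_subset (fun j => w j < 0) S)
    (fun v => falseDiscoveryProportion S (knockoffSelect 1 q v)) w]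
  calc ∑ B ∈ S.powerset, falseDiscoveryProportion S (knockoffSelect 1 q (signFlip B u))
      ≤ ∑ B ∈ S.powerset, q * tailRatio S (fun j => (u j : WithTop ℝ)) B
          (knockoffThreshold 1 q (signFlip B u)) :=
        sum_le_sum fun B hB =>
          falseDiscoveryProportion_knockoffSelect_signFlip_le hu (mem_powerset.1 hB)
    _ = q * ∑ B ∈ S.powerset, tailRatio S (fun j => (u j : WithTop ℝ)) B
          (knockoffThreshold 1 q (signFlip B u)) := (mul_sum _ _ _).symm
    _ ≤ q * 2 ^ #S := mul_le_mul_of_nonneg_left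
        (sum_powerset_tailRatio_le _ _ _ (isStoppingThreshold_knockoffThreshold hu)) hq
    _ = 2 ^ #S * q := mul_comm _ _

theorem measurableSet_mem_knockoffCandidates (c q : ℝ) (i : Fin m) :
    MeasurableSet {v : Fin m → ℝ | |v i| ∈ knockoffCandidates c q v} := by
  simp only [knockoffCandidates, mem_filter, mem_image_of_mem _ (mem_univ i), true_and,
    Set.ofPred_and]
  refine (measurableSet_lt measurable_const (measurable_pi_apply i).abs).inter
    (measurableSet_le (Measurable.div ?_ (Measurable.max ?_ measurable_const)) measurable_const)
  · exact measurable_const.add (measurable_card_filter _ fun k _ =>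
      measurableSet_le (measurable_pi_apply k) (measurable_pi_apply i).abs.neg)
  · exact measurable_card_filter _ fun k _ =>
      measurableSet_le (measurable_pi_apply i).abs (measurable_pi_apply k)

theorem measurableSet_mem_knockoffSelect (c q : ℝ) (j : Fin m) :
    MeasurableSet {v : Fin m → ℝ | j ∈ knockoffSelect c q v} := by
  simp_rw [mem_knockoffSelect_iff, Set.ofPred_exists, Set.ofPred_and]
  exact MeasurableSet.iUnion fun i => (measurableSet_mem_knockoffCandidates c q i).inter
    (measurableSet_le (measurable_pi_apply i).abs (measurable_pi_apply j))

theorem measurable_falseDiscoveryProportion_knockoffSelect (c q : ℝ) (S : Finset (Fin m)) :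
    Measurable fun v => falseDiscoveryProportion S (knockoffSelect c q v) := by
  have hcard : ∀ s : Finset (Fin m), Measurable fun v => (#(knockoffSelect c q v ∩ s) : ℝ) :=
    fun s => by
      simp_rw [inter_comm _ s, ← filter_mem_eq_inter]
      exact measurable_card_filter s fun j _ => measurableSet_mem_knockoffSelect c q j
  have hsel := hcard univ
  simp only [inter_univ] at hsel
  exact (hcard S).div (hsel.max measurable_const)

end Knockoff

theorem knockoff_plus_FDR_control_general
    {Ω : Type*} [MeasurableSpace Ω] (μ : Measure Ω) [IsProbabilityMeasure μ]
    {m : ℕ} (W : Fin m → Ω → ℝ) (hmeas : ∀ j, Measurable (W j))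
    (S0 : Finset (Fin m))
    (hsign : ∀ ε : Fin m → ℝ, (∀ j, ε j = 1 ∨ ε j = -1) → (∀ j ∉ S0, ε j = 1) →
      Measure.map (fun ω j => ε j * W j ω) μ = Measure.map (fun ω j => W j ω) μ)
    (q : ℝ) (hq0 : 0 ≤ q) :
    ∫ ω, (((knockoffSelect 1 q fun j => W j ω) ∩ S0).card : ℝ) /
        max ((knockoffSelect 1 q fun j => W j ω).card : ℝ) 1 ∂μ ≤ q := by
  have hX : Measurable fun ω j => W j ω := measurable_pi_lambda _ hmeas
  have hf := measurable_falseDiscoveryProportion_knockoffSelect 1 q S0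
  change ∫ ω, falseDiscoveryProportion S0 (knockoffSelect 1 q fun j => W j ω) ∂μ ≤ q
  refine integral_le_of_sum_signFlip_le hX (fun B hB => ?_) hf ?_
    (sum_powerset_falseDiscoveryProportion_knockoffSelect_le hq0 S0)
  · simp_rw [signFlip_eq_ite_mul]
    refine hsign _ (fun j => ?_) fun j hj => if_neg fun h => hj (hB h)
    split_ifs
    exacts [Or.inr rfl, Or.inl rfl]
  · exact Integrable.of_bound (hf.comp hX).aestronglyMeasurable 1
      (ae_of_all _ fun ω => abs_falseDiscoveryProportion_le_one _ _)

/-- Knockoff+ FDR control: if the signs of the null statistics are i.i.d. fair coin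
flips conditional on the magnitudes and the non-null signs (expressed as invariance
of the joint law under arbitrary sign flips of null coordinates), then the expected
false discovery proportion of the knockoff+ selection is at most `q`. -/
theorem knockoff_plus_FDR_control
    {Ω : Type*} [MeasurableSpace Ω] (μ : Measure Ω) [IsProbabilityMeasure μ]
    {m : ℕ} (W : Fin m → Ω → ℝ) (hmeas : ∀ j, Measurable (W j))
    (S0 : Finset (Fin m))
    (hsign : ∀ ε : Fin m → ℝ, (∀ j, ε j = 1 ∨ ε j = -1) → (∀ j ∉ S0, ε j = 1) →
      Measure.map (fun ω j => ε j * W j ω) μ = Measure.map (fun ω j => W j ω) μ)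
    (q : ℝ) (hq0 : 0 ≤ q) (hq1 : q ≤ 1) :
    ∫ ω, (((knockoffSelect 1 q fun j => W j ω) ∩ S0).card : ℝ) /
        max ((knockoffSelect 1 q fun j => W j ω).card : ℝ) 1 ∂μ ≤ q :=
  knockoff_plus_FDR_control_general μ W hmeas S0 hsign q hq0
end

section
/- With W, S₀, q as in the knockoff setting, define T₀ = min{ t : #{j : W_j ≤ −t} / max(#{j : W_j ≥ t}, 1) ≤ q } and Ŝ = {j : W_j ≥ T₀}. Then E[ #(Ŝ ∩ S₀) / (#Ŝ + q⁻¹) ] ≤ q. -/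
/-!
Average over the `2 ^ #S₀` sign flips of the null statistics, each of which preserves the law
of `W`. At the knockoff threshold `T` we have `#{j | W_j ≤ -T} ≤ q * max(#Ŝ, 1)`, so pointwise
`#(Ŝ ∩ S₀) / (#Ŝ + q⁻¹) ≤ q * V⁺ / (1 + V⁻)`, where `V⁺`, `V⁻` count the nulls with
`W_j ≥ T`, `W_j ≤ -T`. List the nulls by increasing magnitude and reveal their signs one at a
time: if `A`, `B` count the positive and negative signs still unrevealed, `A / (1 + B)` is a
supermartingale for uniformly random signs and the threshold is a stopping time. Hence the
average of `V⁺ / (1 + V⁻)` over sign patterns is at most `E[A / (1 + n - A)] ≤ 1` for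
`A ~ Bin(n, 1/2)`. Optional stopping is carried out combinatorially, by induction on the
number of nulls, conditioning on the total number of positive signs.
-/

open MeasureTheory
open scoped Classical

open Finset

namespace Knockoff

section SignSequences

variable {n : ℕ}

def tailCount (k : ℕ) (b : Bool) (ε : Fin n → Bool) : ℕ :=
  #{i : Fin n | k ≤ (i : ℕ) ∧ ε i = b}

lemma tailCount_succ_cons (k : ℕ) (b c : Bool) (τ : Fin n → Bool) :
    tailCount (k + 1) b (Fin.cons c τ : Fin (n + 1) → Bool) = tailCount k b τ := by
  rw [tailCount, tailCount, card_filter, card_filter, Fin.sum_univ_succ]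
  simp

lemma tailCount_zero_cons (b c : Bool) (τ : Fin n → Bool) :
    tailCount 0 b (Fin.cons c τ : Fin (n + 1) → Bool) =
      tailCount 0 b τ + if c = b then 1 else 0 := by
  rw [tailCount, tailCount, card_filter, card_filter, Fin.sum_univ_succ]
  simp [add_comm]

lemma tailCount_true_add_false (k : ℕ) (ε : Fin n → Bool) :
    tailCount k true ε + tailCount k false ε = n - k := by
  have hsplit := card_filter_add_card_filter_not (s := {i : Fin n | k ≤ (i : ℕ)})
    fun i => ε i = true
  have htail := card_filter_add_card_filter_not (s := (univ : Finset (Fin n)))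
    fun i => k ≤ (i : ℕ)
  simp only [filter_filter, Bool.not_eq_true, not_le, Fin.card_filter_val_lt, card_univ,
    Fintype.card_fin] at hsplit htail
  rw [tailCount, tailCount, hsplit]
  omega

lemma tailCount_le_tailCount_zero (k : ℕ) (b : Bool) (ε : Fin n → Bool) :
    tailCount k b ε ≤ tailCount 0 b ε :=
  card_le_card <| monotone_filter_right _ fun _ _ h => ⟨Nat.zero_le _, h.2⟩

lemma card_tailCount_zero_eq_le_choose (a : ℕ) :
    #{ε : Fin n → Bool | tailCount 0 true ε = a} ≤ n.choose a := by
  calc _ ≤ #(powersetCard a (univ : Finset (Fin n))) := by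
        refine card_le_card_of_injOn (fun ε => ({i | ε i = true} : Finset (Fin n))) ?_ ?_
        · intro ε hε
          simpa [mem_powersetCard, tailCount] using hε
        · intro ε₁ _ ε₂ _ h
          funext i
          simpa using congrArg (i ∈ ·) h
    _ = n.choose a := by simp

lemma sum_fun_fin_succ_bool {M : Type*} [AddCommMonoid M] (f : (Fin (n + 1) → Bool) → M) :
    ∑ ε, f ε = ∑ τ, f (Fin.cons true τ) + ∑ τ, f (Fin.cons false τ) := by
  rw [← (Fin.consEquiv fun _ => Bool).sum_comp, Fintype.sum_prod_type, Fintype.sum_bool]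
  rfl

noncomputable def stoppedRatio (P : ℕ → ℕ → Prop) (ε : Fin n → Bool) : ℝ :=
  if h : ∃ k, P k (tailCount k true ε) then
    tailCount (Nat.find h) true ε / (1 + tailCount (Nat.find h) false ε)
  else 0

variable (P : ℕ → ℕ → Prop)

lemma stoppedRatio_nonneg (ε : Fin n → Bool) : 0 ≤ stoppedRatio P ε := by
  unfold stoppedRatio
  split <;> positivity

lemma stoppedRatio_of_stop_zero {ε : Fin n → Bool} (h : P 0 (tailCount 0 true ε)) :
    stoppedRatio P ε = tailCount 0 true ε / (1 + tailCount 0 false ε) := by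
  have hex : ∃ k, P k (tailCount k true ε) := ⟨0, h⟩
  rw [stoppedRatio, dif_pos hex, (Nat.find_eq_zero hex).2 h]

lemma stoppedRatio_eq_zero {ε : Fin n → Bool} (h : tailCount 0 true ε = 0) :
    stoppedRatio P ε = 0 := by
  unfold stoppedRatio
  split_ifs
  · rw [Nat.eq_zero_of_le_zero ((tailCount_le_tailCount_zero _ true ε).trans_eq h),
      Nat.cast_zero, zero_div]
  · rfl

lemma stoppedRatio_cons {b : Bool} {τ : Fin n → Bool}
    (h : ¬ P 0 (tailCount 0 true (Fin.cons b τ : Fin (n + 1) → Bool))) :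
    stoppedRatio P (Fin.cons b τ : Fin (n + 1) → Bool) =
      stoppedRatio (fun k => P (k + 1)) τ := by
  have hshift :
      (fun k => P (k + 1) (tailCount (k + 1) true (Fin.cons b τ : Fin (n + 1) → Bool))) =
        fun k => P (k + 1) (tailCount k true τ) := by
    simp only [tailCount_succ_cons]
  by_cases hex : ∃ k, P (k + 1) (tailCount k true τ)
  · have hex' : ∃ k, P (k + 1) (tailCount (k + 1) true (Fin.cons b τ : Fin (n + 1) → Bool)) :=
      hshift ▸ hex
    have hfind : Nat.find hex' = Nat.find hex := by
      simp only [hshift]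
    rw [stoppedRatio, stoppedRatio, dif_pos ⟨_, Nat.find_spec hex'⟩, dif_pos hex,
      Nat.find_comp_succ _ hex' h, hfind, tailCount_succ_cons, tailCount_succ_cons]
  · rw [stoppedRatio, stoppedRatio, dif_neg hex, dif_neg]
    rintro ⟨_ | k, hk⟩
    · exact h hk
    · exact hex ⟨k, by rwa [tailCount_succ_cons] at hk⟩

lemma sum_stoppedRatio_le_choose_of_stop (a : ℕ) (hP : P 0 (a + 1)) :
    ∑ ε : Fin n → Bool with tailCount 0 true ε = a + 1, stoppedRatio P ε ≤ n.choose a := by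
  have hB : ∀ ε : Fin n → Bool, tailCount 0 true ε = a + 1 →
      tailCount 0 false ε = n - (a + 1) := fun ε hε => by
    have := tailCount_true_add_false 0 ε
    omega
  have hchoose : n.choose (a + 1) * (a + 1) ≤ n.choose a * (1 + (n - (a + 1))) := by
    rw [Nat.choose_succ_right_eq]
    exact Nat.mul_le_mul_left _ (by omega)
  calc ∑ ε : Fin n → Bool with tailCount 0 true ε = a + 1, stoppedRatio P ε
      = ∑ ε : Fin n → Bool with tailCount 0 true ε = a + 1,
          ((a + 1 : ℕ) : ℝ) / (1 + (n - (a + 1) : ℕ)) := sum_congr rfl fun ε hε => by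
        rw [mem_filter] at hε
        rw [stoppedRatio_of_stop_zero P (by rwa [hε.2]), hε.2, hB ε hε.2]
    _ ≤ n.choose (a + 1) * (((a + 1 : ℕ) : ℝ) / (1 + (n - (a + 1) : ℕ))) := by
        rw [sum_const, nsmul_eq_mul]
        gcongr
        exact_mod_cast card_tailCount_zero_eq_le_choose (a + 1)
    _ ≤ n.choose a := by
        rw [← mul_div_assoc, div_le_iff₀ (by positivity)]
        exact_mod_cast hchoose

lemma sum_stoppedRatio_eq_of_not_stop (a : ℕ) (hP : ¬ P 0 (a + 1)) :
    ∑ ε : Fin (n + 1) → Bool with tailCount 0 true ε = a + 1, stoppedRatio P ε =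
      ∑ τ : Fin n → Bool with tailCount 0 true τ = a, stoppedRatio (fun k => P (k + 1)) τ +
        ∑ τ : Fin n → Bool with tailCount 0 true τ = a + 1,
          stoppedRatio (fun k => P (k + 1)) τ := by
  have hfirst : ∀ b, ∑ τ : Fin n → Bool, (if tailCount 0 true (Fin.cons b τ :
      Fin (n + 1) → Bool) = a + 1 then stoppedRatio P (Fin.cons b τ) else 0) =
      ∑ τ : Fin n → Bool with tailCount 0 true τ + (if b = true then 1 else 0) = a + 1,
        stoppedRatio (fun k => P (k + 1)) τ := fun b => by
    rw [sum_filter]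
    refine sum_congr rfl fun τ _ => ?_
    rw [← tailCount_zero_cons]
    split_ifs with h
    · exact stoppedRatio_cons P (h ▸ hP)
    · rfl
  rw [sum_filter, sum_fun_fin_succ_bool, hfirst true, hfirst false]
  simp only [if_true, Bool.false_eq_true, if_false, add_zero, add_left_inj]

/-- Optional stopping: `C(n, a) = C(n, a + 1) * (a + 1) / (n - a)` is the sum of the initial
values `A / (1 + B)` over the patterns with `A = a + 1`. -/
lemma sum_stoppedRatio_tailCount_eq_le_choose (a : ℕ) :
    ∑ ε : Fin n → Bool with tailCount 0 true ε = a + 1, stoppedRatio P ε ≤ n.choose a := by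
  induction n generalizing P a with
  | zero =>
    rw [sum_eq_zero fun ε hε => by simp [tailCount] at hε]
    positivity
  | succ n ih =>
    by_cases hP : P 0 (a + 1)
    · exact sum_stoppedRatio_le_choose_of_stop P a hP
    rw [sum_stoppedRatio_eq_of_not_stop P a hP]
    cases a with
    | zero =>
      rw [sum_eq_zero fun τ hτ => stoppedRatio_eq_zero _ (mem_filter.1 hτ).2, zero_add,
        Nat.choose_zero_right]
      exact (ih _ 0).trans (by simp)
    | succ a =>
      rw [Nat.choose_succ_succ, Nat.cast_add]
      exact add_le_add (ih _ a) (ih _ (a + 1))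

lemma sum_stoppedRatio_le_two_pow : ∑ ε : Fin n → Bool, stoppedRatio P ε ≤ 2 ^ n := by
  have hA : ∀ ε ∈ (univ : Finset (Fin n → Bool)), tailCount 0 true ε ∈ range (n + 1) :=
    fun ε _ => mem_range.2 <| Nat.lt_succ_of_le <| (card_filter_le _ _).trans_eq (card_fin n)
  rw [← sum_fiberwise_of_maps_to hA, sum_range_succ',
    sum_eq_zero fun ε hε => stoppedRatio_eq_zero P (mem_filter.1 hε).2, add_zero]
  calc _ ≤ ∑ a ∈ range n, (n.choose a : ℝ) :=
        sum_le_sum fun a _ => sum_stoppedRatio_tailCount_eq_le_choose P a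
    _ ≤ ∑ a ∈ range (n + 1), (n.choose a : ℝ) :=
        sum_le_sum_of_subset_of_nonneg (range_subset_range.2 n.le_succ) fun _ _ _ => by positivity
    _ = 2 ^ n := by exact_mod_cast Nat.sum_range_choose n

end SignSequences

section Ranks

variable {α : Type*} [LinearOrder α]

def numBelow {n : ℕ} (a : Fin n → α) (t : α) : ℕ := #{i | a i < t}

lemma numBelow_mono {n : ℕ} (a : Fin n → α) : Monotone (numBelow a) :=
  fun _ _ h => card_le_card <| monotone_filter_right _ fun _ _ hi => hi.trans_le h

lemma numBelow_le_iff {n : ℕ} {a : Fin n → α} (ha : Monotone a) (t : α) (i : Fin n) :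
    numBelow a t ≤ i ↔ t ≤ a i := by
  constructor
  · intro hle
    by_contra! hlt
    have hsub : Iic i ⊆ ({i | a i < t} : Finset (Fin n)) := fun i' hi' =>
      mem_filter.2 ⟨mem_univ _, (ha (mem_Iic.1 hi')).trans_lt hlt⟩
    have := card_le_card hsub
    rw [Fin.card_Iic] at this
    exact absurd hle (by unfold numBelow; omega)
  · intro hle
    have hsub : ({i' | a i' < t} : Finset (Fin n)) ⊆ Iio i := fun i' hi' => mem_Iio.2 <| by
      by_contra! h
      exact (mem_filter.1 hi').2.not_ge (hle.trans (ha h))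
    simpa [numBelow] using card_le_card hsub

lemma find_eq_apply_min' {C : Finset α} (hC : C.Nonempty) {r : α → ℕ} (hr : Monotone r)
    {p : ℕ → Prop} [DecidablePred p] (hp : ∀ k, p k ↔ ∃ t ∈ C, r t = k) (h : ∃ k, p k) :
    Nat.find h = r (C.min' hC) := by
  refine le_antisymm (Nat.find_min' h ((hp _).2 ⟨_, C.min'_mem hC, rfl⟩)) ?_
  obtain ⟨t, ht, hrt⟩ := (hp _).1 (Nat.find_spec h)
  exact hrt ▸ hr (C.min'_le t ht)

lemma exists_equiv_fin_monotone {ι : Type*} (s : Finset ι) (f : ι → α) :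
    ∃ e : Fin #s ≃ s, Monotone fun i => f (e i) :=
  ⟨(Tuple.sort _).trans s.equivFin.symm, Tuple.monotone_sort fun i => f (s.equivFin.symm i)⟩

end Ranks

section FlipSigns

variable {ι : Type*}

noncomputable def flipSigns (s : Finset ι) (w : ι → ℝ) (j : ι) : ℝ :=
  if j ∈ s then -w j else w j

lemma abs_flipSigns (s : Finset ι) (w : ι → ℝ) (j : ι) : |flipSigns s w j| = |w j| := by
  unfold flipSigns
  split_ifs <;> simp

lemma flipSigns_of_notMem {s : Finset ι} (w : ι → ℝ) {j : ι} (hj : j ∉ s) :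
    flipSigns s w j = w j :=
  if_neg hj

lemma le_flipSigns_iff (s : Finset ι) (w : ι → ℝ) (j : ι) {t : ℝ} (ht : 0 < t) :
    t ≤ flipSigns s w j ↔ t ≤ |w j| ∧ (j ∈ s ↔ w j < 0) := by
  unfold flipSigns
  by_cases hj : j ∈ s <;> rcases lt_or_ge (w j) 0 with h | h <;>
    simp [hj, h, abs_of_neg, abs_of_nonneg, h.not_gt] <;> linarith

lemma flipSigns_le_neg_iff (s : Finset ι) (w : ι → ℝ) (j : ι) {t : ℝ} (ht : 0 < t) :
    flipSigns s w j ≤ -t ↔ t ≤ |w j| ∧ ¬(j ∈ s ↔ w j < 0) := by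
  unfold flipSigns
  by_cases hj : j ∈ s <;> rcases lt_or_ge (w j) 0 with h | h <;>
    simp [hj, h, abs_of_neg, abs_of_nonneg] <;>
    first | linarith | exact ⟨fun _ => by linarith, fun _ => by linarith⟩

lemma card_filter_eq_add_compl [Fintype ι] [DecidableEq ι] (S0 : Finset ι) (p : ι → Prop) :
    #{j | p j} = #{j ∈ S0 | p j} + #{j ∈ S0ᶜ | p j} := by
  simp only [card_filter]
  exact (sum_add_sum_compl S0 _).symm

lemma card_filter_eq_of_equiv {n : ℕ} {S0 : Finset ι} (e : Fin n ≃ S0) (p : ι → Prop) :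
    #{j ∈ S0 | p j} = #{i | p (e i)} := by
  refine (card_bij (fun i _ => (e i : ι)) (fun i hi => ?_) (fun i _ i' _ h => ?_)
    fun j hj => ?_).symm
  · exact mem_filter.2 ⟨(e i).2, (mem_filter.1 hi).2⟩
  · exact e.injective (Subtype.ext h)
  · obtain ⟨hjS, hj⟩ := mem_filter.1 hj
    exact ⟨e.symm ⟨j, hjS⟩, by simpa using hj, by simp⟩

variable {n : ℕ} {S0 : Finset ι}

/-- With the nulls `S0` listed as `e 0, e 1, …`, entry `i` records whether the `i`-th null
statistic is positive after flipping the signs in `s` (immaterial if it is `0`). -/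
noncomputable def signPattern (e : Fin n ≃ S0) (w : ι → ℝ) (s : Finset ι) : Fin n → Bool :=
  fun i => decide ((e i : ι) ∈ s ↔ w (e i) < 0)

lemma signPattern_injOn (e : Fin n ≃ S0) (w : ι → ℝ) :
    Set.InjOn (signPattern e w) S0.powerset := by
  intro s hs s' hs' h
  ext j
  by_cases hj : j ∈ S0
  · have := congrFun h (e.symm ⟨j, hj⟩)
    simp only [signPattern, Equiv.apply_symm_apply, decide_eq_decide] at this
    tauto
  · exact iff_of_false (fun h => hj (mem_powerset.1 hs h)) fun h => hj (mem_powerset.1 hs' h)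

variable {e : Fin n ≃ S0} {w : ι → ℝ} {s : Finset ι} {t : ℝ}

lemma card_filter_le_flipSigns (he : Monotone fun i => |w (e i)|) (ht : 0 < t) :
    #{j ∈ S0 | t ≤ flipSigns s w j} =
      tailCount (numBelow (fun i => |w (e i)|) t) true (signPattern e w s) := by
  rw [card_filter_eq_of_equiv e, tailCount]
  congr 1
  refine filter_congr fun i _ => ?_
  rw [le_flipSigns_iff s w _ ht, numBelow_le_iff he, signPattern, decide_eq_true_iff]

lemma card_filter_flipSigns_le_neg (he : Monotone fun i => |w (e i)|) (ht : 0 < t) :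
    #{j ∈ S0 | flipSigns s w j ≤ -t} =
      tailCount (numBelow (fun i => |w (e i)|) t) false (signPattern e w s) := by
  rw [card_filter_eq_of_equiv e, tailCount]
  congr 1
  refine filter_congr fun i _ => ?_
  rw [flipSigns_le_neg_iff s w _ ht, numBelow_le_iff he, signPattern, decide_eq_false_iff_not]

variable [Fintype ι] [DecidableEq ι]

lemma card_filter_univ_le_flipSigns (he : Monotone fun i => |w (e i)|) (hs : s ⊆ S0)
    (ht : 0 < t) :
    #{j | t ≤ flipSigns s w j} =
      tailCount (numBelow (fun i => |w (e i)|) t) true (signPattern e w s) +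
        #{j ∈ S0ᶜ | t ≤ w j} := by
  rw [card_filter_eq_add_compl S0, card_filter_le_flipSigns he ht,
    filter_congr fun j hj => by rw [flipSigns_of_notMem w fun h => mem_compl.1 hj (hs h)]]

lemma card_filter_univ_flipSigns_le_neg (he : Monotone fun i => |w (e i)|) (hs : s ⊆ S0)
    (ht : 0 < t) :
    #{j | flipSigns s w j ≤ -t} =
      n - numBelow (fun i => |w (e i)|) t -
        tailCount (numBelow (fun i => |w (e i)|) t) true (signPattern e w s) +
        #{j ∈ S0ᶜ | w j ≤ -t} := by
  rw [card_filter_eq_add_compl S0, card_filter_flipSigns_le_neg he ht,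
    filter_congr fun j hj => by rw [flipSigns_of_notMem w fun h => mem_compl.1 hj (hs h)]]
  have := tailCount_true_add_false (numBelow (fun i => |w (e i)|) t) (signPattern e w s)
  omega

end FlipSigns

section NullRatio

variable {m n : ℕ}

/-- The knockoff condition at the threshold `|w j|`, the `k`-th null magnitude in the order
`a`, when `A` of the nulls beyond it are positive and hence `n - k - A` are negative. -/
def knockoffStopRule (c q : ℝ) (S0 : Finset (Fin m)) (w : Fin m → ℝ) (a : Fin n → ℝ)
    (k A : ℕ) : Prop :=
  ∃ j, 0 < |w j| ∧ numBelow a |w j| = k ∧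
    (c + ((n - k - A + #{j' ∈ S0ᶜ | w j' ≤ -|w j|} : ℕ) : ℝ)) /
      max ((A + #{j' ∈ S0ᶜ | |w j| ≤ w j'} : ℕ) : ℝ) 1 ≤ q

noncomputable def nullRatio (c q : ℝ) (S0 : Finset (Fin m)) (w : Fin m → ℝ) : ℝ :=
  if h : (knockoffCandidates c q w).Nonempty then
    (#{j ∈ S0 | (knockoffCandidates c q w).min' h ≤ w j} : ℝ) /
      (1 + #{j ∈ S0 | w j ≤ -(knockoffCandidates c q w).min' h})
  else 0

variable {c q : ℝ} {S0 : Finset (Fin m)} {e : Fin n ≃ S0} {w : Fin m → ℝ} {s : Finset (Fin m)}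

lemma knockoffStopRule_iff (he : Monotone fun i => |w (e i)|) (hs : s ⊆ S0) (k : ℕ) :
    knockoffStopRule c q S0 w (fun i => |w (e i)|) k (tailCount k true (signPattern e w s)) ↔
      ∃ t ∈ knockoffCandidates c q (flipSigns s w), numBelow (fun i => |w (e i)|) t = k := by
  simp only [knockoffStopRule, knockoffCandidates, mem_filter, mem_image, mem_univ, true_and,
    abs_flipSigns]
  constructor
  · rintro ⟨j, hj, rfl, hq⟩
    refine ⟨|w j|, ⟨⟨j, rfl⟩, hj, ?_⟩, rfl⟩
    rwa [card_filter_univ_le_flipSigns he hs hj, card_filter_univ_flipSigns_le_neg he hs hj]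
  · rintro ⟨_, ⟨⟨j, rfl⟩, hj, hq⟩, rfl⟩
    refine ⟨j, hj, rfl, ?_⟩
    rwa [card_filter_univ_le_flipSigns he hs hj, card_filter_univ_flipSigns_le_neg he hs hj]
      at hq

lemma nullRatio_flipSigns (he : Monotone fun i => |w (e i)|) (hs : s ⊆ S0) :
    nullRatio c q S0 (flipSigns s w) =
      stoppedRatio (knockoffStopRule c q S0 w fun i => |w (e i)|) (signPattern e w s) := by
  have hiff := knockoffStopRule_iff (c := c) (q := q) he hs
  unfold nullRatio stoppedRatio
  by_cases hC : (knockoffCandidates c q (flipSigns s w)).Nonempty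
  · have hex := (hiff _).2 ⟨_, min'_mem _ hC, rfl⟩
    have hpos : 0 < (knockoffCandidates c q (flipSigns s w)).min' hC :=
      (mem_filter.1 (min'_mem _ hC)).2.1
    rw [dif_pos hC, dif_pos ⟨_, hex⟩, find_eq_apply_min' hC (numBelow_mono _) hiff,
      card_filter_le_flipSigns he hpos, card_filter_flipSigns_le_neg he hpos]
  · rw [dif_neg hC, dif_neg]
    rintro ⟨k, hk⟩
    obtain ⟨t, ht, -⟩ := (hiff k).1 hk
    exact hC ⟨t, ht⟩

lemma sum_nullRatio_flipSigns_le (c q : ℝ) (S0 : Finset (Fin m)) (w : Fin m → ℝ) :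
    ∑ s ∈ S0.powerset, nullRatio c q S0 (flipSigns s w) ≤ 2 ^ #S0 := by
  obtain ⟨e, he⟩ := exists_equiv_fin_monotone S0 fun j => |w j|
  set P := knockoffStopRule c q S0 w fun i => |w (e i)|
  calc ∑ s ∈ S0.powerset, nullRatio c q S0 (flipSigns s w)
      = ∑ s ∈ S0.powerset, stoppedRatio P (signPattern e w s) :=
        sum_congr rfl fun s hs => nullRatio_flipSigns he (mem_powerset.1 hs)
    _ = ∑ ε ∈ S0.powerset.image (signPattern e w), stoppedRatio P ε :=
        (sum_image (signPattern_injOn e w)).symm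
    _ ≤ ∑ ε, stoppedRatio P ε := sum_le_univ_sum_of_nonneg (stoppedRatio_nonneg P)
    _ ≤ 2 ^ #S0 := sum_stoppedRatio_le_two_pow P

end NullRatio

section ModifiedFDP

variable {m : ℕ}

noncomputable def modifiedFDP (q : ℝ) (S0 : Finset (Fin m)) (w : Fin m → ℝ) : ℝ :=
  (#(knockoffSelect 0 q w ∩ S0) : ℝ) / (#(knockoffSelect 0 q w) + q⁻¹)

variable {q : ℝ} (S0 : Finset (Fin m)) (w : Fin m → ℝ)

lemma modifiedFDP_nonneg (hq : 0 < q) : 0 ≤ modifiedFDP q S0 w := by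
  unfold modifiedFDP
  positivity

lemma modifiedFDP_le_one (hq : 0 < q) : modifiedFDP q S0 w ≤ 1 := by
  refine div_le_one_of_le₀ ?_ (by positivity)
  have : (#(knockoffSelect 0 q w ∩ S0) : ℝ) ≤ #(knockoffSelect 0 q w) := by
    exact_mod_cast card_le_card inter_subset_left
  linarith [inv_pos.2 hq]

lemma modifiedFDP_le (hq : 0 < q) : modifiedFDP q S0 w ≤ q * nullRatio 0 q S0 w := by
  unfold modifiedFDP nullRatio knockoffSelect
  split_ifs with h
  · set T := (knockoffCandidates 0 q w).min' h
    have hT := (mem_filter.1 (min'_mem _ h)).2.2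
    rw [filter_inter, univ_inter]
    set R := #{j | T ≤ w j}
    have hVR : #{j ∈ S0 | T ≤ w j} ≤ R := card_le_card (filter_subset_filter _ (subset_univ _))
    have hVm : #{j ∈ S0 | w j ≤ -T} ≤ #{j | w j ≤ -T} :=
      card_le_card (filter_subset_filter _ (subset_univ _))
    rcases Nat.eq_zero_or_pos R with hR | hR
    · rw [show #{j ∈ S0 | T ≤ w j} = 0 by omega]
      simp
    have hmax : max (R : ℝ) 1 = R := max_eq_left (by exact_mod_cast hR)
    rw [zero_add, hmax, div_le_iff₀ (by positivity)] at hT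
    have hVmR : (#{j ∈ S0 | w j ≤ -T} : ℝ) ≤ q * R := le_trans (by exact_mod_cast hVm) hT
    rw [mul_div_assoc', div_le_div_iff₀ (by positivity) (by positivity)]
    calc (#{j ∈ S0 | T ≤ w j} : ℝ) * (1 + #{j ∈ S0 | w j ≤ -T})
        ≤ #{j ∈ S0 | T ≤ w j} * (q * R + 1) :=
          mul_le_mul_of_nonneg_left (by linarith) (by positivity)
      _ = q * #{j ∈ S0 | T ≤ w j} * (R + q⁻¹) := by field_simp
  · simp

lemma sum_modifiedFDP_flipSigns_le (hq : 0 < q) :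
    ∑ s ∈ S0.powerset, modifiedFDP q S0 (flipSigns s w) ≤ #S0.powerset * q :=
  calc ∑ s ∈ S0.powerset, modifiedFDP q S0 (flipSigns s w)
      ≤ ∑ s ∈ S0.powerset, q * nullRatio 0 q S0 (flipSigns s w) :=
        sum_le_sum fun s _ => modifiedFDP_le S0 _ hq
    _ = q * ∑ s ∈ S0.powerset, nullRatio 0 q S0 (flipSigns s w) := (mul_sum _ _ _).symm
    _ ≤ q * 2 ^ #S0 := mul_le_mul_of_nonneg_left (sum_nullRatio_flipSigns_le 0 q S0 w) hq.le
    _ = #S0.powerset * q := by rw [card_powerset, Nat.cast_pow, Nat.cast_two, mul_comm]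

end ModifiedFDP

section Measurability

variable {m : ℕ}

lemma mem_knockoffSelect_iff (c q : ℝ) (w : Fin m → ℝ) (j : Fin m) :
    j ∈ knockoffSelect c q w ↔ ∃ t ∈ knockoffCandidates c q w, t ≤ w j := by
  unfold knockoffSelect
  split_ifs with h
  · simp only [mem_filter, mem_univ, true_and]
    exact ⟨fun hj => ⟨_, min'_mem _ h, hj⟩, fun ⟨t, ht, htj⟩ => (min'_le _ _ ht).trans htj⟩
  · simp only [notMem_empty, false_iff]
    exact fun ⟨t, ht, _⟩ => h ⟨t, ht⟩

lemma measurable_card_filter {α ι : Type*} [MeasurableSpace α] (s : Finset ι)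
    {p : ι → α → Prop} (hp : ∀ i, MeasurableSet {x | p i x}) :
    Measurable fun x => (#{i ∈ s | p i x} : ℝ) := by
  simp only [card_filter, Nat.cast_sum, Nat.cast_ite, Nat.cast_one, Nat.cast_zero]
  exact Finset.measurable_sum _ fun i _ => Measurable.ite (hp i) measurable_const measurable_const

lemma measurableSet_mem_knockoffSelect (c q : ℝ) (j : Fin m) :
    MeasurableSet {w : Fin m → ℝ | j ∈ knockoffSelect c q w} := by
  have hset : {w : Fin m → ℝ | j ∈ knockoffSelect c q w} = ⋃ i, {w | 0 < |w i|} ∩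
      {w | (c + #{j' | w j' ≤ -|w i|}) / max (#{j' | |w i| ≤ w j'} : ℝ) 1 ≤ q} ∩
      {w | |w i| ≤ w j} := by
    ext w
    simp [mem_knockoffSelect_iff, knockoffCandidates, and_assoc]
  have hwi : ∀ i, Measurable fun w : Fin m → ℝ => |w i| := fun i => (measurable_pi_apply i).abs
  rw [hset]
  refine .iUnion fun i => .inter (.inter (measurableSet_lt measurable_const (hwi i)) ?_)
    (measurableSet_le (hwi i) (measurable_pi_apply j))
  refine measurableSet_le (Measurable.div ?_ ?_) measurable_const
  · exact measurable_const.add <| measurable_card_filter _ fun j' =>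
      measurableSet_le (measurable_pi_apply j') (hwi i).neg
  · exact (measurable_card_filter _ fun j' =>
      measurableSet_le (hwi i) (measurable_pi_apply j')).max measurable_const

lemma measurable_modifiedFDP (q : ℝ) (S0 : Finset (Fin m)) : Measurable (modifiedFDP q S0) := by
  have hsel := measurableSet_mem_knockoffSelect 0 q (m := m)
  refine Measurable.div ?_ (Measurable.add ?_ measurable_const)
  · simpa only [filter_mem_eq_inter, inter_comm] using measurable_card_filter S0 hsel
  · simpa only [filter_mem_eq_inter, univ_inter] using measurable_card_filter univ hsel

end Measurability

lemma measurePreserving_flipSigns {Ω ι : Type*} [MeasurableSpace Ω] {μ : Measure Ω}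
    {X : Ω → ι → ℝ} (hX : Measurable X) (s : Finset ι)
    (h : μ.map (fun ω j => (if j ∈ s then -1 else 1) * X ω j) = μ.map X) :
    MeasurePreserving (flipSigns s) (μ.map X) (μ.map X) := by
  have hflip : Measurable (flipSigns s : (ι → ℝ) → ι → ℝ) := measurable_pi_lambda _ fun j => by
    unfold flipSigns
    split_ifs
    exacts [(measurable_pi_apply j).neg, measurable_pi_apply j]
  refine ⟨hflip, ?_⟩
  rw [Measure.map_map hflip hX, ← h]
  congr with ω j
  simp only [Function.comp, flipSigns]
  split_ifs <;> ring

lemma integral_le_of_sum_comp_le {E ι : Type*} [MeasurableSpace E] {ν : Measure E}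
    [IsProbabilityMeasure ν] {s : Finset ι} (hs : s.Nonempty) {g : ι → E → E}
    (hg : ∀ i ∈ s, MeasurePreserving (g i) ν ν) {F : E → ℝ} (hF : Integrable F ν) {c : ℝ}
    (hsum : ∀ x, ∑ i ∈ s, F (g i x) ≤ #s * c) : ∫ x, F x ∂ν ≤ c := by
  have hcomp : ∀ i ∈ s, ∫ x, F (g i x) ∂ν = ∫ x, F x ∂ν := fun i hi => by
    rw [← integral_map (hg i hi).aemeasurable (by rw [(hg i hi).map_eq]; exact hF.1),
      (hg i hi).map_eq]
  have hint : ∀ i ∈ s, Integrable (fun x => F (g i x)) ν := fun i hi =>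
    ((hg i hi).integrable_comp hF.aestronglyMeasurable).2 hF
  have hmul : (#s : ℝ) * ∫ x, F x ∂ν ≤ #s * c :=
    calc (#s : ℝ) * ∫ x, F x ∂ν = ∑ i ∈ s, ∫ x, F (g i x) ∂ν := by
          rw [sum_congr rfl hcomp, sum_const, nsmul_eq_mul]
      _ = ∫ x, ∑ i ∈ s, F (g i x) ∂ν := (integral_finsetSum s hint).symm
      _ ≤ ∫ _, (#s * c : ℝ) ∂ν :=
          integral_mono (integrable_finsetSum s hint) (integrable_const _) hsum
      _ = #s * c := by simp
  exact le_of_mul_le_mul_left hmul (by exact_mod_cast hs.card_pos)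

end Knockoff

theorem knockoff_mFDR_control_general
    {Ω : Type*} [MeasurableSpace Ω] (μ : Measure Ω) [IsProbabilityMeasure μ]
    {m : ℕ} (W : Fin m → Ω → ℝ) (hmeas : ∀ j, Measurable (W j))
    (S0 : Finset (Fin m))
    (hsign : ∀ ε : Fin m → ℝ, (∀ j, ε j = 1 ∨ ε j = -1) → (∀ j ∉ S0, ε j = 1) →
      Measure.map (fun ω j => ε j * W j ω) μ = Measure.map (fun ω j => W j ω) μ)
    (q : ℝ) (hq0 : 0 < q) :
    ∫ ω, (((knockoffSelect 0 q fun j => W j ω) ∩ S0).card : ℝ) /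
        (((knockoffSelect 0 q fun j => W j ω).card : ℝ) + q⁻¹) ∂μ ≤ q := by
  have hX : Measurable fun ω j => W j ω := measurable_pi_lambda _ hmeas
  have := Measure.isProbabilityMeasure_map (μ := μ) hX.aemeasurable
  have hF := Knockoff.measurable_modifiedFDP q S0
  change ∫ ω, Knockoff.modifiedFDP q S0 (fun j => W j ω) ∂μ ≤ q
  rw [← integral_map hX.aemeasurable hF.aestronglyMeasurable]
  refine Knockoff.integral_le_of_sum_comp_le ⟨∅, empty_mem_powerset S0⟩ (fun s hs => ?_)
    (.of_bound hF.aestronglyMeasurable 1 (ae_of_all _ fun w => ?_))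
    fun w => Knockoff.sum_modifiedFDP_flipSigns_le S0 w hq0
  · refine Knockoff.measurePreserving_flipSigns hX s (hsign _ (fun j => ?_) fun j hj => ?_)
    · split_ifs <;> simp
    · exact if_neg fun h => hj (mem_powerset.1 hs h)
  · rw [Real.norm_eq_abs, abs_of_nonneg (Knockoff.modifiedFDP_nonneg S0 w hq0)]
    exact Knockoff.modifiedFDP_le_one S0 w hq0

/-- The (non-plus) knockoff filter controls the modified FDR:
`E[ #(Ŝ ∩ S₀) / (#Ŝ + q⁻¹) ] ≤ q`, under the sign-symmetry of null statistics. -/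
theorem knockoff_mFDR_control
    {Ω : Type*} [MeasurableSpace Ω] (μ : Measure Ω) [IsProbabilityMeasure μ]
    {m : ℕ} (W : Fin m → Ω → ℝ) (hmeas : ∀ j, Measurable (W j))
    (S0 : Finset (Fin m))
    (hsign : ∀ ε : Fin m → ℝ, (∀ j, ε j = 1 ∨ ε j = -1) → (∀ j ∉ S0, ε j = 1) →
      Measure.map (fun ω j => ε j * W j ω) μ = Measure.map (fun ω j => W j ω) μ)
    (q : ℝ) (hq0 : 0 < q) (hq1 : q ≤ 1) :
    ∫ ω, (((knockoffSelect 0 q fun j => W j ω) ∩ S0).card : ℝ) /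
        (((knockoffSelect 0 q fun j => W j ω).card : ℝ) + q⁻¹) ∂μ ≤ q :=
  knockoff_mFDR_control_general μ W hmeas S0 hsign q hq0
end

section
/- Let M be a symmetric positive semidefinite 2m×2m block matrix of the form [[G, G − D], [G − D, G]] where G is m×m symmetric PSD and D = diag(s) with s ≥ 0. Then M is positive semidefinite if and only if D ⪰ 0 and 2G − D ⪰ 0, i.e., 0 ⪯ diag(s) ⪯ 2G. -/
open Matrix

/-!
In the coordinates `(u + w, u - w)` the quadratic form of `[[A, B], [B, A]]` splits as
`2 (uᵀ(A + B)u + wᵀ(A - B)w)`, so the block matrix is positive semidefinite iff `A + B` and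
`A - B` are. For `A = G`, `B = G - diag(s)` these are `2G - diag(s)` and `diag(s)`.
-/

theorem isHermitian_fromBlocks_self_iff {m : Type*} (A B : Matrix m m ℝ) :
    (fromBlocks A B B A).IsHermitian ↔ (A + B).IsHermitian ∧ (A - B).IsHermitian := by
  rw [isHermitian_fromBlocks_iff]
  constructor
  · rintro ⟨hA, hB, -, -⟩
    exact ⟨hA.add hB, hA.sub hB⟩
  · rintro ⟨hAB, hAB'⟩
    have hA : A.IsHermitian := by
      convert (hAB.add hAB').smul (IsSelfAdjoint.all (1 / 2 : ℝ)) using 1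
      module
    have hB : B.IsHermitian := by
      convert (hAB.sub hAB').smul (IsSelfAdjoint.all (1 / 2 : ℝ)) using 1
      module
    exact ⟨hA, hB, hB, hA⟩

section

variable {m : Type*} [Fintype m]

theorem sumElim_add_sub_dotProduct_fromBlocks_self_mulVec (A B : Matrix m m ℝ) (u w : m → ℝ) :
    Sum.elim (u + w) (u - w) ⬝ᵥ (fromBlocks A B B A *ᵥ Sum.elim (u + w) (u - w))
      = 2 * (u ⬝ᵥ ((A + B) *ᵥ u) + w ⬝ᵥ ((A - B) *ᵥ w)) := by
  simp only [fromBlocks_mulVec, sumElim_dotProduct_sumElim, add_mulVec, sub_mulVec,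
    mulVec_add, mulVec_sub, dotProduct_add, dotProduct_sub, add_dotProduct, sub_dotProduct,
    Sum.elim_comp_inl, Sum.elim_comp_inr]
  ring

theorem posSemidef_fromBlocks_self_iff (A B : Matrix m m ℝ) :
    (fromBlocks A B B A).PosSemidef ↔ (A + B).PosSemidef ∧ (A - B).PosSemidef := by
  simp only [posSemidef_iff_dotProduct_mulVec, star_trivial, isHermitian_fromBlocks_self_iff]
  constructor
  · rintro ⟨⟨hAB, hAB'⟩, hM⟩
    refine ⟨⟨hAB, fun u => ?_⟩, ⟨hAB', fun w => ?_⟩⟩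
    · have h := hM (Sum.elim (u + 0) (u - 0))
      rw [sumElim_add_sub_dotProduct_fromBlocks_self_mulVec] at h
      simpa only [zero_dotProduct, add_zero, Nat.ofNat_pos, mul_nonneg_iff_of_pos_left] using h
    · have h := hM (Sum.elim (0 + w) (0 - w))
      rw [sumElim_add_sub_dotProduct_fromBlocks_self_mulVec] at h
      simpa only [zero_dotProduct, zero_add, Nat.ofNat_pos, mul_nonneg_iff_of_pos_left] using h
  · rintro ⟨⟨hAB, hu⟩, ⟨hAB', hw⟩⟩
    refine ⟨⟨hAB, hAB'⟩, fun v => ?_⟩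
    obtain ⟨u, w, rfl⟩ : ∃ u w : m → ℝ, Sum.elim (u + w) (u - w) = v := by
      refine ⟨(2⁻¹ : ℝ) • (v ∘ Sum.inl + v ∘ Sum.inr), (2⁻¹ : ℝ) • (v ∘ Sum.inl - v ∘ Sum.inr), ?_⟩
      ext (i | i) <;>
        simp only [Sum.elim_inl, Sum.elim_inr, Pi.add_apply, Pi.sub_apply, Pi.smul_apply,
          Function.comp_apply, smul_eq_mul] <;>
        ring
    rw [sumElim_add_sub_dotProduct_fromBlocks_self_mulVec]
    exact mul_nonneg zero_le_two (add_nonneg (hu u) (hw w))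

end

theorem knockoff_gram_psd_iff_general
    {m : Type*} [Fintype m] [DecidableEq m]
    (G : Matrix m m ℝ)
    (s : m → ℝ) :
    (Matrix.fromBlocks G (G - Matrix.diagonal s) (G - Matrix.diagonal s) G).PosSemidef
      ↔ (Matrix.diagonal s).PosSemidef ∧ (2 • G - Matrix.diagonal s).PosSemidef := by
  rw [posSemidef_fromBlocks_self_iff, sub_sub_cancel, ← add_sub_assoc, ← two_nsmul, and_comm]

/-- Feasibility of the knockoff Gram matrix: for `G` symmetric PSD and `D = diag(s)`
with `s ≥ 0`, the block matrix `[[G, G−D], [G−D, G]]` is positive semidefinite iff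
`D ⪰ 0` and `2G − D ⪰ 0`, i.e. `0 ⪯ diag(s) ⪯ 2G`. -/
theorem knockoff_gram_psd_iff
    {m : Type*} [Fintype m] [DecidableEq m]
    (G : Matrix m m ℝ) (hG : G.PosSemidef)
    (s : m → ℝ) (hs : ∀ j, 0 ≤ s j) :
    (Matrix.fromBlocks G (G - Matrix.diagonal s) (G - Matrix.diagonal s) G).PosSemidef
      ↔ (Matrix.diagonal s).PosSemidef ∧ (2 • G - Matrix.diagonal s).PosSemidef :=
  knockoff_gram_psd_iff_general G s
end
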